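/- arXiv:1503.01406 — 8 statements merged into one kernel-verified Lean document; each statement's English description precedes it below -/
import Mathlib

section
/- The theory NFU is consistent: there exists a nonempty structure for the language with a single binary relation symbol ∈ in which the weak extensionality axiom and every instance of stratified comprehension are true (equivalently, the theory NFU is satisfiable). -/
namespace NFUConsistency

/-- Formulas of the first-order language `L` with a single binary relation symbol `∈`
(and equality), and no function or constant symbols; variables are indexed by `ℕ`. -/
inductive Fml : Type
  | eq : ℕ → ℕ → Fml
  | mem : ℕ → ℕ → Fml
  | not : Fml → Fml
  | imp : Fml → Fml → Fml
  | all : ℕ → Fml → Fml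

namespace Fml

/-- The variable `x` occurs (anywhere) in the formula. -/
def Occurs (x : ℕ) : Fml → Prop
  | .eq y z => x = y ∨ x = z
  | .mem y z => x = y ∨ x = z
  | .not φ => Occurs x φ
  | .imp φ ψ => Occurs x φ ∨ Occurs x ψ
  | .all y φ => x = y ∨ Occurs x φ

/-- `σ` stratifies the formula: `σ x = σ y` for each atomic subformula `x = y`,
and `σ x + 1 = σ y` for each atomic subformula `x ∈ y`. -/
def StratifiedBy (σ : ℕ → ℤ) : Fml → Prop
  | .eq y z => σ y = σ z
  | .mem y z => σ y + 1 = σ z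
  | .not φ => StratifiedBy σ φ
  | .imp φ ψ => StratifiedBy σ φ ∧ StratifiedBy σ ψ
  | .all _ φ => StratifiedBy σ φ

/-- A formula is stratified if some integer-valued assignment of types to variables
stratifies it. -/
def Stratified (φ : Fml) : Prop := ∃ σ : ℕ → ℤ, StratifiedBy σ φ

/-- Conjunction, as a defined connective. -/
def andF (φ ψ : Fml) : Fml := not (imp φ (not ψ))

/-- Biconditional, as a defined connective. -/
def iffF (φ ψ : Fml) : Fml := andF (imp φ ψ) (imp ψ φ)

/-- Existential quantification, as a defined quantifier. -/
def exF (x : ℕ) (φ : Fml) : Fml := not (all x (not φ))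

/-- Tarskian satisfaction of a formula in the structure `(M, E)` under a valuation. -/
def Sat (M : Type) (E : M → M → Prop) : Fml → (ℕ → M) → Prop
  | .eq y z, v => v y = v z
  | .mem y z, v => E (v y) (v z)
  | .not φ, v => ¬ Sat M E φ v
  | .imp φ ψ, v => Sat M E φ v → Sat M E ψ v
  | .all y φ, v => ∀ a : M, Sat M E φ (Function.update v y a)

end Fml

/-- The weak extensionality axiom `∀x∀y∀z (z ∈ x → (x = y ↔ ∀w (w ∈ x ↔ w ∈ y)))`. -/
def weakExtAxiom : Fml :=
  .all 0 (.all 1 (.all 2 (.imp (.mem 2 0)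
    (Fml.iffF (.eq 0 1) (.all 3 (Fml.iffF (.mem 3 0) (.mem 3 1)))))))

/-- The comprehension instance `∃A ∀x (x ∈ A ↔ φ)`. -/
def comprehension (x A : ℕ) (φ : Fml) : Fml :=
  Fml.exF A (.all x (Fml.iffF (.mem x A) φ))

/-- A formula is true in `(M, E)` if it is satisfied under every valuation; for a
formula with free variables this is exactly the truth of its universal closure. -/
def TrueIn (M : Type) (E : M → M → Prop) (φ : Fml) : Prop :=
  ∀ v : ℕ → M, Fml.Sat M E φ v

/-!
Jensen's construction, in Boffa's form. The colimit `N` of the iterated ultrapowers of the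
hereditarily finite sets `(ℕ, hfMem)` satisfies every sentence true in them, in particular
extensionality and separation, and carries an elementary self-embedding `j` (the ultrapower map,
applied one level up) together with an element `Y`, the germ of the stages `V_n`, such that
`𝒫 (j Y) ⊆ Y`. The direct limit of `N → N → ⋯` along `j` turns `j` into an automorphism `σ`,
with `𝒫 Y ⊆ σ Y` for the image of `j Y`.

On the members of `Y` put `a ∈ b` iff `σ b ⊆ Y` and `a ∈ σ b`. If `τ` stratifies `φ`, replacing
the value `a` of each variable `u` by `σ^(τ u) a` turns `φ` into a formula of `N` whose
quantifiers are bounded by `σ^(τ u) Y`: stratification is what makes `a ∈ σ b` and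
`σ^(τ a) a ∈ σ^(τ a + 1) b` agree. The comprehension set `{x | φ}` is then cut out by separation
from `σ^(τ x) Y`, lies in `σ^(τ x + 1) Y`, and is pulled back by `σ^(τ x + 1)`.
-/

open Function Filter

namespace Fml

variable {M : Type} {E : M → M → Prop}

def maxVar : Fml → ℕ
  | .eq y z => max y z
  | .mem y z => max y z
  | .not φ => maxVar φ
  | .imp φ ψ => max (maxVar φ) (maxVar ψ)
  | .all y φ => max y (maxVar φ)

theorem le_maxVar_of_occurs {u : ℕ} {φ : Fml} (h : Occurs u φ) : u ≤ maxVar φ := by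
  induction φ with
  | eq | mem => rcases h with rfl | rfl <;> simp [maxVar]
  | not φ ih => exact ih h
  | imp φ ψ ih₁ ih₂ => rcases h with h | h <;> simp [maxVar, ih₁, ih₂, h]
  | all y φ ih =>
    rcases h with rfl | h
    · simp [maxVar]
    · simp [maxVar, ih h]

theorem sat_congr {φ : Fml} {v w : ℕ → M} (h : ∀ u, Occurs u φ → v u = w u) :
    Sat M E φ v ↔ Sat M E φ w := by
  induction φ generalizing v w with
  | eq y z => simp only [Sat, h y (.inl rfl), h z (.inr rfl)]
  | mem y z => simp only [Sat, h y (.inl rfl), h z (.inr rfl)]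
  | not φ ih => exact (ih h).not
  | imp φ ψ ih₁ ih₂ =>
    exact imp_congr (ih₁ fun u hu => h u (.inl hu)) (ih₂ fun u hu => h u (.inr hu))
  | all y φ ih =>
    refine forall_congr' fun a => ih fun u hu => ?_
    by_cases huy : u = y
    · simp [huy]
    · simp [update_of_ne huy, h u (.inr hu)]

theorem sat_update_of_not_occurs {φ : Fml} {x : ℕ} (hx : ¬ Occurs x φ) (v : ℕ → M) (a : M) :
    Sat M E φ (update v x a) ↔ Sat M E φ v :=
  sat_congr fun u hu => update_of_ne (by rintro rfl; exact hx hu) a v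

@[simp] theorem sat_andF {φ ψ : Fml} {v : ℕ → M} :
    Sat M E (andF φ ψ) v ↔ Sat M E φ v ∧ Sat M E ψ v := by
  simp only [andF, Sat]; tauto

@[simp] theorem sat_iffF {φ ψ : Fml} {v : ℕ → M} :
    Sat M E (iffF φ ψ) v ↔ (Sat M E φ v ↔ Sat M E ψ v) := by
  simp only [iffF, sat_andF, Sat]; tauto

@[simp] theorem sat_exF {φ : Fml} {y : ℕ} {v : ℕ → M} :
    Sat M E (exF y φ) v ↔ ∃ a, Sat M E φ (update v y a) := by
  simp [exF, Sat]

end Fml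

open Fml

section Axioms

variable {M : Type} {E : M → M → Prop}

theorem sat_comprehension {x A : ℕ} {φ : Fml} (hA : ¬ Occurs A φ) (hAx : A ≠ x) (v : ℕ → M) :
    Sat M E (comprehension x A φ) v ↔ ∃ a, ∀ b, E b a ↔ Sat M E φ (update v x b) := by
  simp only [comprehension, sat_exF, Sat, sat_iffF, update_self, update_of_ne hAx]
  refine exists_congr fun a => forall_congr' fun b => ?_
  rw [update_comm hAx, sat_update_of_not_occurs hA]

theorem sat_weakExtAxiom (v : ℕ → M) :
    Sat M E weakExtAxiom v ↔ ∀ x y z, E z x → (x = y ↔ ∀ w, E w x ↔ E w y) := by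
  simp [weakExtAxiom, Sat]

def Extensional (E : M → M → Prop) : Prop := ∀ a b, (∀ c, E c a ↔ E c b) → a = b

def extAxiom : Fml := .all 0 (.all 1 (.imp (.all 2 (iffF (.mem 2 0) (.mem 2 1))) (.eq 0 1)))

theorem trueIn_extAxiom_iff : TrueIn M E extAxiom ↔ Extensional E :=
  ⟨fun h a b => by simpa [extAxiom, Sat] using h (fun _ => a) a b,
    fun h v => by simpa [extAxiom, Sat, Extensional] using h⟩

def DefinableSeparation (M : Type) (E : M → M → Prop) : Prop :=
  ∀ (φ : Fml) (x : ℕ) (v : ℕ → M) (b : M), ∃ s, ∀ z, E z s ↔ E z b ∧ Sat M E φ (update v x z)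

def sepAxiom (x y s : ℕ) (φ : Fml) : Fml := comprehension x s (andF (.mem x y) φ)

theorem sat_sepAxiom {x y s : ℕ} {φ : Fml} (hs : ¬ Occurs s φ) (hsx : s ≠ x) (hsy : s ≠ y)
    (hxy : x ≠ y) (v : ℕ → M) :
    Sat M E (sepAxiom x y s φ) v ↔ ∃ a, ∀ b, E b a ↔ E b (v y) ∧ Sat M E φ (update v x b) := by
  rw [sepAxiom, sat_comprehension (by simp [andF, Occurs, hs, hsx, hsy]) hsx]
  simp [Sat, update_of_ne hxy.symm]

theorem definableSeparation_of_trueIn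
    (h : ∀ x y s φ, ¬ Occurs s φ → s ≠ x → s ≠ y → x ≠ y → TrueIn M E (sepAxiom x y s φ)) :
    DefinableSeparation M E := by
  intro φ x v b
  set y := maxVar φ + x + 1
  have hy : ¬ Occurs y φ := fun hy => by have := le_maxVar_of_occurs hy; omega
  have hy' : ¬ Occurs (y + 1) φ := fun hy' => by have := le_maxVar_of_occurs hy'; omega
  obtain ⟨s, hs⟩ := (sat_sepAxiom hy' (by omega) (by omega) (by omega) _).1
    (h x y (y + 1) φ hy' (by omega) (by omega) (by omega) (update v y b))
  refine ⟨s, fun z => ?_⟩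
  rw [hs, update_self, update_comm (by omega), sat_update_of_not_occurs hy]

end Axioms

section Elementary

variable {M N P : Type} {E : M → M → Prop} {F : N → N → Prop} {G : P → P → Prop}

def IsElementary (E : M → M → Prop) (F : N → N → Prop) (f : M → N) : Prop :=
  ∀ (φ : Fml) (v : ℕ → M), Sat N F φ (f ∘ v) ↔ Sat M E φ v

namespace IsElementary

variable {f : M → N}

theorem comp {g : N → P} (hg : IsElementary F G g) (hf : IsElementary E F f) :
    IsElementary E G (g ∘ f) :=
  fun φ v => (hg φ (f ∘ v)).trans (hf φ v)

theorem rel_iff (hf : IsElementary E F f) (a b : M) : F (f a) (f b) ↔ E a b := by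
  simpa [Sat] using hf (.mem 0 1) (update (fun _ => b) 0 a)

theorem injective (hf : IsElementary E F f) : Injective f := fun a b hab => by
  simpa [Sat, hab] using hf (.eq 0 1) (update (fun _ => b) 0 a)

noncomputable def relIso {g : M → M} (hf : IsElementary E E g) (hs : Surjective g) : E ≃r E :=
  ⟨Equiv.ofBijective g ⟨hf.injective, hs⟩, hf.rel_iff _ _⟩

end IsElementary

def PowersetIn (E : M → M → Prop) (a b : M) : Prop := ∀ z, (∀ c, E c z → E c a) → E z b

def powersetInF : Fml := .all 2 (.imp (.all 3 (.imp (.mem 3 2) (.mem 3 0))) (.mem 2 1))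

theorem sat_powersetInF (v : ℕ → M) : Sat M E powersetInF v ↔ PowersetIn E (v 0) (v 1) := by
  simp [powersetInF, PowersetIn, Sat]

theorem IsElementary.powersetIn_iff {f : M → N} (hf : IsElementary E F f) (a b : M) :
    PowersetIn F (f a) (f b) ↔ PowersetIn E a b := by
  simpa [sat_powersetInF, comp_update] using hf powersetInF (update (fun _ => b) 0 a)

end Elementary

section Ultrapower

variable {ι : Type} (𝒰 : Ultrafilter ι) {M N : Type} {E : M → M → Prop} {F : N → N → Prop}

/-- Łoś's theorem. -/
theorem sat_germ_iff (φ : Fml) (v : ℕ → ι → M) :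
    Sat (Germ (𝒰 : Filter ι) M) (Germ.LiftRel E) φ (fun u => (v u : Germ (𝒰 : Filter ι) M)) ↔
      ∀ᶠ i in 𝒰, Sat M E φ (fun u => v u i) := by
  induction φ generalizing v with
  | eq y z => exact Germ.coe_eq
  | mem y z => exact Germ.liftRel_coe
  | not φ ih => exact (ih v).not.trans Ultrafilter.eventually_not.symm
  | imp φ ψ ih₁ ih₂ => exact (imp_congr (ih₁ v) (ih₂ v)).trans Ultrafilter.eventually_imp.symm
  | all y φ ih =>
    have hupd (w : ι → M) : update (fun u => (v u : Germ (𝒰 : Filter ι) M)) y w =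
        fun u => (update v y w u : Germ (𝒰 : Filter ι) M) :=
      funext fun u => (apply_update (fun _ (g : ι → M) => (g : Germ (𝒰 : Filter ι) M)) v y w u).symm
    have hupd_at (w : ι → M) (i : ι) :
        (fun u => update v y w u i) = update (fun u => v u i) y (w i) :=
      funext fun u => apply_update (fun _ g => g i) v y w u
    simp only [Sat]
    constructor
    · intro H
      by_contra hc
      have hc' : ∀ᶠ i in 𝒰, ∃ b, ¬ Sat M E φ (update (fun u => v u i) y b) :=
        (Ultrafilter.eventually_not.2 hc).mono fun _ => not_forall.1
      obtain ⟨w, hw⟩ := hc'.choice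
      have hHw := H w
      rw [hupd, ih] at hHw
      obtain ⟨i, hi, hwi⟩ := (hHw.and hw).exists
      exact hwi (hupd_at w i ▸ hi)
    · intro H a
      induction a using Germ.inductionOn with
      | h w =>
        rw [hupd, ih]
        exact H.mono fun i hi => hupd_at w i ▸ hi (w i)

theorem exists_eq_coe_germ (V : ℕ → Germ (𝒰 : Filter ι) M) :
    ∃ v : ℕ → ι → M, V = fun u => (v u : Germ (𝒰 : Filter ι) M) := by
  choose v hv using fun u => Quot.exists_rep (V u)
  exact ⟨v, funext fun u => (hv u).symm⟩

theorem trueIn_germ {φ : Fml} (h : TrueIn M E φ) :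
    TrueIn (Germ (𝒰 : Filter ι) M) (Germ.LiftRel E) φ := by
  intro V
  obtain ⟨v, rfl⟩ := exists_eq_coe_germ 𝒰 V
  exact (sat_germ_iff 𝒰 φ v).2 (.of_forall fun _ => h _)

theorem isElementary_germ_const :
    IsElementary E (Germ.LiftRel E) (fun a : M => (a : Germ (𝒰 : Filter ι) M)) :=
  fun φ v => (sat_germ_iff 𝒰 φ fun u _ => v u).trans eventually_const

theorem IsElementary.germ_map {f : M → N} (hf : IsElementary E F f) :
    IsElementary (Germ.LiftRel E) (Germ.LiftRel F) (Germ.map f : Germ (𝒰 : Filter ι) M → _) := by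
  intro φ V
  obtain ⟨v, rfl⟩ := exists_eq_coe_germ 𝒰 V
  exact (sat_germ_iff 𝒰 φ fun u => f ∘ v u).trans
    ((eventually_congr (.of_forall fun i => hf φ _)).trans (sat_germ_iff 𝒰 φ v).symm)

theorem powersetIn_germ_iff (a b : ι → M) :
    PowersetIn (Germ.LiftRel E) (a : Germ (𝒰 : Filter ι) M) b ↔
      ∀ᶠ i in 𝒰, PowersetIn E (a i) (b i) := by
  have := sat_germ_iff (E := E) 𝒰 powersetInF (update (fun _ => b) 0 a)
  simpa [sat_powersetInF] using this

end Ultrapower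

section Chain

variable {A : ℕ → Type} {R : ∀ n, A n → A n → Prop} (f : ∀ n, A n → A (n + 1))

def chainMap {n m : ℕ} (h : n ≤ m) (x : A n) : A m := Nat.leRecOn h (fun {k} => f k) x

theorem chainMap_self {n : ℕ} (x : A n) : chainMap f le_rfl x = x := Nat.leRecOn_self x

theorem chainMap_succ {n m : ℕ} (h : n ≤ m) (x : A n) :
    chainMap f (h.trans m.le_succ) x = f m (chainMap f h x) := Nat.leRecOn_succ h x

theorem chainMap_chainMap {n m k : ℕ} (hnm : n ≤ m) (hmk : m ≤ k) (x : A n) :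
    chainMap f hmk (chainMap f hnm x) = chainMap f (hnm.trans hmk) x :=
  (Nat.leRecOn_trans hnm hmk x).symm

variable {f}

theorem isElementary_chainMap (hf : ∀ n, IsElementary (R n) (R (n + 1)) (f n)) {n m : ℕ}
    (h : n ≤ m) : IsElementary (R n) (R m) (chainMap f h) := by
  induction m, h using Nat.le_induction with
  | base =>
    rw [show chainMap f le_rfl = id from funext (chainMap_self f)]
    exact fun _ _ => Iff.rfl
  | succ m h ih =>
    rw [show chainMap f _ = f m ∘ chainMap f h from funext (chainMap_succ f h)]
    exact (hf m).comp ih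

variable (hf : ∀ n, IsElementary (R n) (R (n + 1)) (f n))

def chainEmbedding (n m : ℕ) (h : n ≤ m) : A n ↪ A m :=
  ⟨chainMap f h, (isElementary_chainMap hf h).injective⟩

instance : DirectedSystem A fun n m h => chainEmbedding hf n m h :=
  ⟨fun _ x => chainMap_self f x, fun _ _ _ _ _ x => chainMap_chainMap f _ _ x⟩

abbrev ChainLimit : Type := DirectLimit A (chainEmbedding hf)

def ChainLimit.incl (n : ℕ) (x : A n) : ChainLimit hf := ⟦⟨n, x⟩⟧

noncomputable def ChainLimit.rel : ChainLimit hf → ChainLimit hf → Prop :=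
  DirectLimit.lift₂ _ _ R fun _ _ h x y => propext ((isElementary_chainMap hf h).rel_iff x y).symm

namespace ChainLimit

variable {hf}

theorem incl_chainMap {n m : ℕ} (h : n ≤ m) (x : A n) : incl hf m (chainMap f h x) = incl hf n x :=
  DirectLimit.mk_apply n m x h

theorem incl_succ {n : ℕ} (x : A n) : incl hf (n + 1) (f n x) = incl hf n x := by
  have h : chainMap f n.le_succ x = f n x := by rw [chainMap_succ f le_rfl, chainMap_self]
  rw [← h, incl_chainMap]

theorem incl_injective (n : ℕ) : Injective (incl hf n) :=
  DirectLimit.mk_injective _ (fun _ _ _ => Embedding.injective _) n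

theorem rel_incl {n : ℕ} (x y : A n) : rel hf (incl hf n x) (incl hf n y) ↔ R n x y :=
  Iff.of_eq (DirectLimit.lift₂_def _ _ _ _ n x y)

theorem exists_eq_incl_of_le (z : ChainLimit hf) (n : ℕ) : ∃ m, n ≤ m ∧ ∃ x, z = incl hf m x := by
  obtain ⟨k, x, rfl⟩ := DirectLimit.exists_eq_mk _ z
  exact ⟨max n k, le_max_left n k, chainMap f (le_max_right n k) x,
    (incl_chainMap (le_max_right n k) x).symm⟩

theorem exists_eq_comp_incl (v : ℕ → ChainLimit hf) (k : ℕ) :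
    ∃ m, ∃ w : ℕ → A m, ∀ u ≤ k, v u = incl hf m (w u) := by
  induction k with
  | zero =>
    obtain ⟨m, -, x, hx⟩ := exists_eq_incl_of_le (v 0) 0
    exact ⟨m, fun _ => x, fun u hu => by rwa [Nat.le_zero.1 hu]⟩
  | succ k ih =>
    obtain ⟨m, w, hw⟩ := ih
    obtain ⟨m', hm, x, hx⟩ := exists_eq_incl_of_le (v (k + 1)) m
    refine ⟨m', update (chainMap f hm ∘ w) (k + 1) x, fun u hu => ?_⟩
    rcases (Nat.le_succ_iff.1 hu) with hu | rfl
    · rw [update_of_ne (by omega), comp_apply, incl_chainMap, hw u hu]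
    · rw [update_self, hx]

theorem isElementary_incl (n : ℕ) : IsElementary (R n) (rel hf) (incl hf n) := by
  intro φ
  induction φ generalizing n with
  | eq y z => exact fun v => (incl_injective n).eq_iff
  | mem y z => exact fun v => rel_incl _ _
  | not φ ih => exact fun v => (ih n v).not
  | imp φ ψ ih₁ ih₂ => exact fun v => imp_congr (ih₁ n v) (ih₂ n v)
  | all y φ ih =>
    intro v
    refine ⟨fun H b => (ih n _).1 (comp_update (incl hf n) v y b ▸ H (incl hf n b)), fun H a => ?_⟩
    obtain ⟨m, hnm, x, rfl⟩ := exists_eq_incl_of_le a n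
    have hv : incl hf n ∘ v = incl hf m ∘ (chainMap f hnm ∘ v) :=
      funext fun u => (incl_chainMap hnm (v u)).symm
    rw [hv, ← comp_update, ih m]
    exact (isElementary_chainMap hf hnm (.all y φ) v).2 H x

theorem sat_iff_of_eq_comp_incl {φ : Fml} {v : ℕ → ChainLimit hf} {m : ℕ} {w : ℕ → A m}
    (hw : ∀ u ≤ maxVar φ, v u = incl hf m (w u)) : Sat _ (rel hf) φ v ↔ Sat (A m) (R m) φ w :=
  (sat_congr fun u hu => hw u (le_maxVar_of_occurs hu)).trans (isElementary_incl m φ w)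

theorem trueIn {φ : Fml} (h : ∀ n, TrueIn (A n) (R n) φ) : TrueIn _ (rel hf) φ := fun v =>
  have ⟨m, w, hw⟩ := exists_eq_comp_incl v (maxVar φ)
  (sat_iff_of_eq_comp_incl hw).2 (h m w)

variable (G : ∀ n, A n → A (n + 1)) (hG : ∀ n x, f (n + 1) (G n x) = G (n + 1) (f n x))
include hG

theorem chainMap_comm {n m : ℕ} (h : n ≤ m) (x : A n) :
    G m (chainMap f h x) = chainMap f (Nat.succ_le_succ h) (G n x) := by
  induction m, h using Nat.le_induction with
  | base => rw [chainMap_self, chainMap_self]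
  | succ m h ih => rw [chainMap_succ f h, ← hG, ih, ← chainMap_succ f]

def shiftMap : ChainLimit hf → ChainLimit hf :=
  DirectLimit.lift _ (fun n x => incl hf (n + 1) (G n x)) fun n m h x => by
    simp only [chainEmbedding, Embedding.coeFn_mk]
    rw [chainMap_comm G hG h, incl_chainMap]

theorem shiftMap_incl (n : ℕ) (x : A n) : shiftMap G hG (incl hf n x) = incl hf (n + 1) (G n x) :=
  rfl

theorem isElementary_shiftMap (hG' : ∀ n, IsElementary (R n) (R (n + 1)) (G n)) :
    IsElementary (rel hf) (rel hf) (shiftMap G hG) := by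
  intro φ v
  obtain ⟨m, w, hw⟩ := exists_eq_comp_incl v (maxVar φ)
  have hw' : ∀ u ≤ maxVar φ, (shiftMap G hG ∘ v) u = incl hf (m + 1) (G m (w u)) := fun u hu => by
    rw [comp_apply, hw u hu, shiftMap_incl]
  rw [sat_iff_of_eq_comp_incl hw', sat_iff_of_eq_comp_incl hw]
  exact hG' m φ w

end ChainLimit

end Chain

theorem exists_relIso_extending {N : Type} {E : N → N → Prop} {j : N → N}
    (hj : IsElementary E E j) :
    ∃ (N' : Type) (E' : N' → N' → Prop) (ι : N → N') (σ : E' ≃r E'),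
      IsElementary E E' ι ∧ (∀ φ, TrueIn N E φ → TrueIn N' E' φ) ∧ ∀ a, σ (ι (j a)) = ι a := by
  let hf : ∀ n : ℕ, IsElementary (M := (fun _ : ℕ => N) n) E E j := fun _ => hj
  have incl_j (n : ℕ) (x : N) : ChainLimit.incl hf (n + 1) (j x) = ChainLimit.incl hf n x :=
    ChainLimit.incl_succ (A := fun _ => N) (f := fun _ => j) x
  have hσ := ChainLimit.isElementary_shiftMap (hf := hf) (fun _ => id) (fun _ _ => rfl)
    fun _ _ _ => Iff.rfl
  have hsurj : Surjective (ChainLimit.shiftMap (hf := hf) (fun _ => id) (fun _ _ => rfl)) := by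
    intro z
    obtain ⟨n, -, x, rfl⟩ := ChainLimit.exists_eq_incl_of_le z 0
    exact ⟨ChainLimit.incl hf n (j x), incl_j n x⟩
  exact ⟨_, _, ChainLimit.incl hf 0, hσ.relIso hsurj, ChainLimit.isElementary_incl (hf := hf) 0,
    fun φ h => ChainLimit.trueIn fun _ => h, fun a => incl_j 0 a⟩

section HereditarilyFinite

/-- Ackermann's coding of hereditarily finite sets by natural numbers. -/
def hfMem (a b : ℕ) : Prop := a ∈ Finset.equivBitIndices b

theorem extensional_hfMem : Extensional hfMem := fun _ _ h =>
  Finset.equivBitIndices.injective (Finset.ext h)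

theorem trueIn_hfMem_sepAxiom {x y s : ℕ} {φ : Fml} (hs : ¬ Occurs s φ) (hsx : s ≠ x)
    (hsy : s ≠ y) (hxy : x ≠ y) : TrueIn ℕ hfMem (sepAxiom x y s φ) := by
  classical
  intro v
  rw [sat_sepAxiom hs hsx hsy hxy]
  exact ⟨Finset.equivBitIndices.symm ((Finset.equivBitIndices (v y)).filter
    fun z => Sat ℕ hfMem φ (update v x z)), fun z => by simp [hfMem]⟩

def towerTwo : ℕ → ℕ
  | 0 => 1
  | n + 1 => 2 ^ towerTwo n

theorem towerTwo_pos (n : ℕ) : 0 < towerTwo n := by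
  cases n <;> simp [towerTwo]

theorem monotone_towerTwo : Monotone towerTwo :=
  monotone_nat_of_le_succ fun _ => Nat.lt_two_pow_self.le

/-- The code of the stage `V_(n + 1)` of the cumulative hierarchy. -/
def hfStage (n : ℕ) : ℕ := Finset.equivBitIndices.symm (Finset.range (towerTwo n))

theorem hfMem_hfStage {z n : ℕ} : hfMem z (hfStage n) ↔ z < towerTwo n := by
  simp [hfMem, hfStage]

theorem powersetIn_hfStage {i k : ℕ} (h : i < k) : PowersetIn hfMem (hfStage i) (hfStage k) := by
  intro z hz
  rw [hfMem_hfStage]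
  calc z = ∑ c ∈ Finset.equivBitIndices z, 2 ^ c := (Finset.equivBitIndices.symm_apply_apply z).symm
    _ < 2 ^ towerTwo i := Nat.geomSum_lt le_rfl fun c hc => hfMem_hfStage.1 (hz c hc)
    _ ≤ towerTwo k := monotone_towerTwo h

end HereditarilyFinite

noncomputable section Tower

def TowerType : ℕ → Type
  | 0 => ℕ
  | n + 1 => Germ (hyperfilter ℕ : Filter ℕ) (TowerType n)

def towerRel : ∀ n, TowerType n → TowerType n → Prop
  | 0 => hfMem
  | n + 1 => Germ.LiftRel (towerRel n)

def towerConst (n : ℕ) (x : TowerType n) : TowerType (n + 1) := (x : Germ _ _)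

def towerInner : ∀ n, TowerType n → TowerType (n + 1)
  | 0 => towerConst 0
  | n + 1 => Germ.map (towerInner n)

theorem isElementary_towerConst (n : ℕ) :
    IsElementary (towerRel n) (towerRel (n + 1)) (towerConst n) :=
  isElementary_germ_const _

theorem isElementary_towerInner : ∀ n, IsElementary (towerRel n) (towerRel (n + 1)) (towerInner n)
  | 0 => isElementary_towerConst 0
  | n + 1 => (isElementary_towerInner n).germ_map _

theorem towerConst_towerInner (n : ℕ) (x : TowerType n) :
    towerConst (n + 1) (towerInner n x) = towerInner (n + 1) (towerConst n x) :=
  (Germ.map_const _ _ _).symm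

theorem trueIn_towerRel {φ : Fml} (h : TrueIn ℕ hfMem φ) : ∀ n, TrueIn _ (towerRel n) φ
  | 0 => h
  | n + 1 => trueIn_germ _ (trueIn_towerRel h n)

def hfStageGerm : TowerType 1 := (hfStage : Germ (hyperfilter ℕ : Filter ℕ) ℕ)

/-- The two sides are the germs of `i ↦ [k ↦ hfStage i]` and `i ↦ [k ↦ hfStage k]`, and
`𝒫 (hfStage i) ⊆ hfStage k` as soon as `i < k`. -/
theorem powersetIn_towerInner_hfStage :
    PowersetIn (towerRel 2) (towerInner 1 hfStageGerm) (towerConst 1 hfStageGerm) :=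
  (powersetIn_germ_iff _ (fun i => towerConst 0 (hfStage i)) fun _ => hfStageGerm).2
    (.of_forall fun i => (powersetIn_germ_iff _ (fun _ => hfStage i) hfStage).2
      (hyperfilter_le_cofinite
        ((Nat.cofinite_eq_atTop ▸ eventually_gt_atTop i).mono fun _ => powersetIn_hfStage)))

theorem exists_isElementary_powersetIn :
    ∃ (N : Type) (E : N → N → Prop) (j : N → N) (Y : N), IsElementary E E j ∧
      (∀ φ, TrueIn ℕ hfMem φ → TrueIn N E φ) ∧ (∃ a, E a Y) ∧ PowersetIn E (j Y) Y := by
  refine ⟨_, _, ChainLimit.shiftMap towerInner towerConst_towerInner,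
    ChainLimit.incl isElementary_towerConst 1 hfStageGerm,
    ChainLimit.isElementary_shiftMap _ _ isElementary_towerInner,
    fun φ h => ChainLimit.trueIn (trueIn_towerRel h),
    ⟨ChainLimit.incl _ 1 (towerConst 0 (0 : ℕ)), (ChainLimit.rel_incl _ _).2 ?_⟩, ?_⟩
  · exact Germ.liftRel_coe.2 (.of_forall fun n => hfMem_hfStage.2 (towerTwo_pos n))
  · rw [ChainLimit.shiftMap_incl, ← ChainLimit.incl_succ (f := towerConst) hfStageGerm,
      (ChainLimit.isElementary_incl 2).powersetIn_iff]
    exact powersetIn_towerInner_hfStage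

end Tower

section Boffa

variable {N : Type} {E : N → N → Prop}

section RelAut

variable (g : E ≃r E)

theorem rel_inv_apply_iff (a b : N) : E a (g⁻¹ b) ↔ E (g a) b := by
  rw [← g.map_rel_iff, RelIso.apply_inv_self]

theorem inv_apply_rel_iff (a b : N) : E (g⁻¹ a) b ↔ E a (g b) := by
  rw [← g.map_rel_iff, RelIso.apply_inv_self]

theorem forall_rel_apply_imp_iff (a : N) (p : N → Prop) :
    (∀ c, E c (g a) → p c) ↔ ∀ c, E c a → p (g c) :=
  ⟨fun H c hc => H (g c) (g.map_rel_iff.2 hc),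
    fun H c hc => by simpa using H (g⁻¹ c) ((inv_apply_rel_iff g c a).2 hc)⟩

end RelAut

/-- Relativization to the typed universes: variable `base` is scratch, and variable
`base + 1 + u` stands for the universe of the type of `u`. -/
def relativize (base : ℕ) : Fml → Fml
  | .eq u w => .eq u w
  | .mem u w => andF (.all base (.imp (.mem base w) (.mem base (base + 1 + u)))) (.mem u w)
  | .not θ => .not (relativize base θ)
  | .imp θ ψ => .imp (relativize base θ) (relativize base ψ)
  | .all u θ => .all u (.imp (.mem u (base + 1 + u)) (relativize base θ))

variable (σ : E ≃r E) (Y : N)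

/-- Boffa's model: `b` has the members of `σ b` when `σ b ⊆ Y`, and is an urelement otherwise. -/
def boffaMem (a b : {a // E a Y}) : Prop := (∀ c, E c (σ b) → E c Y) ∧ E a (σ b)

theorem trueIn_boffaMem_weakExtAxiom (hext : Extensional E) :
    TrueIn {a // E a Y} (boffaMem σ Y) weakExtAxiom := by
  intro v
  rw [sat_weakExtAxiom]
  rintro x y z hz
  refine ⟨by rintro rfl; simp, fun hxy => Subtype.ext (σ.injective (hext _ _ fun c => ?_))⟩
  have hxY := hz.1
  have hyY := ((hxy z).1 hz).1
  exact ⟨fun hc => ((hxy ⟨c, hxY c hc⟩).1 ⟨hxY, hc⟩).2,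
    fun hc => ((hxy ⟨c, hyY c hc⟩).2 ⟨hyY, hc⟩).2⟩

def typedVal (base : ℕ) (τ : ℕ → ℤ) (v : ℕ → {a // E a Y}) (p : ℕ) : N :=
  if base < p then (σ ^ τ (p - (base + 1))) Y else (σ ^ τ p) (v p)

variable {σ Y} {base : ℕ} {τ : ℕ → ℤ} {v : ℕ → {a // E a Y}}

theorem typedVal_of_le {p : ℕ} (hp : p ≤ base) : typedVal σ Y base τ v p = (σ ^ τ p) (v p) :=
  if_neg (not_lt.2 hp)

theorem typedVal_universe (u : ℕ) : typedVal σ Y base τ v (base + 1 + u) = (σ ^ τ u) Y := by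
  simp [typedVal, show base < base + 1 + u by omega]

theorem typedVal_update {u : ℕ} (hu : u ≤ base) (a : {a // E a Y}) :
    typedVal σ Y base τ (update v u a) = update (typedVal σ Y base τ v) u ((σ ^ τ u) a) := by
  funext p
  by_cases hp : p = u
  · subst hp; simp [typedVal_of_le hu]
  · simp [typedVal, update_of_ne hp]

theorem sat_boffaMem_iff {θ : Fml} (hτ : StratifiedBy τ θ) (hθ : ∀ u, Occurs u θ → u < base)
    (v : ℕ → {a // E a Y}) :
    Sat _ (boffaMem σ Y) θ v ↔ Sat N E (relativize base θ) (typedVal σ Y base τ v) := by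
  induction θ generalizing v with
  | eq u w =>
    have hτ : τ u = τ w := hτ
    simp only [Sat, relativize, typedVal_of_le (hθ u (.inl rfl)).le,
      typedVal_of_le (hθ w (.inr rfl)).le, hτ, (σ ^ τ w).injective.eq_iff, Subtype.ext_iff]
  | mem u w =>
    have hτ : τ w = τ u + 1 := hτ.symm
    have hu := hθ u (.inl rfl)
    have hw := hθ w (.inr rfl)
    simp only [relativize, sat_andF, Sat, update_self, update_of_ne (show w ≠ base by omega),
      update_of_ne (show base + 1 + u ≠ base by omega), typedVal_universe, typedVal_of_le hu.le,
      typedVal_of_le hw.le, hτ, zpow_add_one, RelIso.mul_apply, boffaMem]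
    rw [forall_rel_apply_imp_iff (σ ^ τ u)]
    simp only [RelIso.map_rel_iff]
  | not θ ih => exact (ih hτ hθ v).not
  | imp θ ψ ih₁ ih₂ =>
    exact imp_congr (ih₁ hτ.1 (fun u hu => hθ u (.inl hu)) v)
      (ih₂ hτ.2 (fun u hu => hθ u (.inr hu)) v)
  | all u θ ih =>
    have hu := hθ u (.inl rfl)
    simp only [Sat, relativize, update_self, update_of_ne (show base + 1 + u ≠ u by omega),
      typedVal_universe]
    rw [forall_rel_apply_imp_iff (σ ^ τ u)]
    simp only [ih hτ (fun p hp => hθ p (.inr hp)), typedVal_update hu.le]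
    exact ⟨fun H c hc => H ⟨c, hc⟩, fun H a => H a a.2⟩

variable (σ Y)

theorem powersetIn_zpow (hpow : PowersetIn E Y (σ Y)) (k : ℤ) :
    PowersetIn E ((σ ^ k) Y) ((σ ^ (k + 1)) Y) := by
  intro z hz
  rw [zpow_add_one, RelIso.mul_apply, ← inv_apply_rel_iff (σ ^ k)]
  refine hpow _ fun c hc => ?_
  rw [rel_inv_apply_iff (σ ^ k)] at hc
  exact (σ ^ k).map_rel_iff.1 (hz _ hc)

theorem trueIn_boffaMem_comprehension (hsep : DefinableSeparation N E)
    (hpow : PowersetIn E Y (σ Y)) {φ : Fml} {x A : ℕ} (hφ : Stratified φ) (hA : ¬ Occurs A φ)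
    (hAx : A ≠ x) : TrueIn {a // E a Y} (boffaMem σ Y) (comprehension x A φ) := by
  obtain ⟨τ, hτ⟩ := hφ
  intro v
  rw [sat_comprehension hA hAx]
  set base := maxVar φ + x + 1
  have hθ : ∀ u, Occurs u φ → u < base := fun u hu => by
    have := le_maxVar_of_occurs hu
    omega
  set g := σ ^ τ x
  obtain ⟨s, hs⟩ := hsep (relativize base φ) x (typedVal σ Y base τ v) (g Y)
  have hsY : ∀ c, E c s → E c (g Y) := fun c hc => ((hs c).1 hc).1
  have hσs : σ ((σ ^ (τ x + 1))⁻¹ s) = g⁻¹ s := by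
    rw [← RelIso.mul_apply, zpow_add_one, mul_inv_rev, mul_inv_cancel_left]
  refine ⟨⟨(σ ^ (τ x + 1))⁻¹ s, (inv_apply_rel_iff _ _ _).2 (powersetIn_zpow σ Y hpow _ s hsY)⟩,
    fun b => ?_⟩
  rw [sat_boffaMem_iff hτ hθ, typedVal_update (by omega), boffaMem, hσs, rel_inv_apply_iff g, hs,
    g.map_rel_iff]
  simp only [b.2, true_and]
  refine and_iff_right fun c hc => ?_
  rw [rel_inv_apply_iff g] at hc
  exact g.map_rel_iff.1 (hsY _ hc)

end Boffa

theorem extensional_and_definableSeparation_of_hf {M : Type} {E : M → M → Prop}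
    (h : ∀ φ, TrueIn ℕ hfMem φ → TrueIn M E φ) : Extensional E ∧ DefinableSeparation M E :=
  ⟨trueIn_extAxiom_iff.1 (h _ (trueIn_extAxiom_iff.2 extensional_hfMem)),
    definableSeparation_of_trueIn fun _ _ _ _ hs hsx hsy hxy =>
      h _ (trueIn_hfMem_sepAxiom hs hsx hsy hxy)⟩

/-- Jensen's set theory NFU is consistent: there is a nonempty structure
`(M, E)` for the language with one binary relation symbol `∈` in which the
weak extensionality axiom and the universal closure of every instance
`∃A ∀x (x ∈ A ↔ φ)` of stratified comprehension (with `φ` stratified and `A` not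
occurring in `φ`) are true; that is, NFU is satisfiable. -/
theorem NFU_consistent :
    ∃ (M : Type) (E : M → M → Prop), Nonempty M ∧
      TrueIn M E weakExtAxiom ∧
      (∀ (φ : Fml) (x A : ℕ), Fml.Stratified φ → ¬ Fml.Occurs A φ → A ≠ x →
        TrueIn M E (comprehension x A φ)) := by
  obtain ⟨N, E, j, Y, hj, hN, ⟨a, ha⟩, hpow⟩ := exists_isElementary_powersetIn
  obtain ⟨N', E', ι, σ, hι, hN', hσ⟩ := exists_relIso_extending hj
  obtain ⟨hext, hsep⟩ := extensional_and_definableSeparation_of_hf fun φ h => hN' φ (hN φ h)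
  have hpow' : PowersetIn E' (ι (j Y)) (σ (ι (j Y))) := by
    rwa [hσ, hι.powersetIn_iff]
  exact ⟨{b // E' b (ι (j Y))}, boffaMem σ (ι (j Y)), ⟨⟨ι (j a), (hι.comp hj).rel_iff a Y |>.2 ha⟩⟩,
    trueIn_boffaMem_weakExtAxiom σ _ hext,
    fun φ x A hφ hA hAx => trueIn_boffaMem_comprehension σ _ hsep hpow' hφ hA hAx⟩

end NFUConsistency
end

section
/- A subset X of α is symmetric if and only if there exists a set C of litters such that either C is small or ℒ ∖ C is small, and the symmetric difference of X with the union of C is small. -/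
open Cardinal Set

universe u

namespace NFPaper

variable {α : Type u}

/-- A set is small if its cardinality is less than `κ`. -/
def SmallSet (κ : Cardinal.{u}) {β : Type u} (s : Set β) : Prop := #s < κ

/-- A near-litter: a subset of `α` whose symmetric difference with some litter
(member of the litter partition `ℒ`) is small. -/
def IsNearLitter (κ : Cardinal.{u}) (ℒ : Set (Set α)) (N : Set α) : Prop :=
  ∃ L ∈ ℒ, SmallSet κ (symmDiff N L)

/-- Membership in the group `G` of all permutations of `α` under which the image of
every litter is a near-litter. -/
def Allowable (κ : Cardinal.{u}) (ℒ : Set (Set α)) (ρ : Equiv.Perm α) : Prop :=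
  ∀ L ∈ ℒ, IsNearLitter κ ℒ (ρ '' L)

/-- `(S, T)` is a support of `X ⊆ α`: `S` is a small set of elements of `α`, `T` is a
small set of litters, and every allowable permutation fixing every element of `S` and
fixing every litter in `T` setwise fixes `X` setwise. -/
def IsSupport (κ : Cardinal.{u}) (ℒ : Set (Set α)) (X : Set α)
    (S : Set α) (T : Set (Set α)) : Prop :=
  SmallSet κ S ∧ T ⊆ ℒ ∧ SmallSet κ T ∧
    ∀ ρ : Equiv.Perm α, Allowable κ ℒ ρ →
      (∀ a ∈ S, ρ a = a) → (∀ L ∈ T, ρ '' L = L) → ρ '' X = X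

lemma smallSet_mono {κ : Cardinal.{u}} {s t : Set α} (h : s ⊆ t) (ht : SmallSet κ t) :
    SmallSet κ s := lt_of_le_of_lt (Cardinal.mk_le_mk_of_subset h) ht

lemma smallSet_of_finite {κ : Cardinal.{u}} (hκ : ℵ₀ < κ) {s : Set α} (hs : s.Finite) :
    SmallSet κ s := lt_trans hs.lt_aleph0 hκ

lemma mem_swap_image [DecidableEq α] {a b x : α} {L : Set α} :
    x ∈ Equiv.swap a b '' L ↔ Equiv.swap a b x ∈ L := by
  rw [Set.mem_image_equiv, Equiv.symm_swap]

lemma swap_image_symmDiff_subset [DecidableEq α] (a b : α) (L : Set α) :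
    symmDiff (Equiv.swap a b '' L) L ⊆ {a, b} := by
  intro x hx
  by_contra hxab
  simp only [Set.mem_insert_iff, Set.mem_singleton_iff] at hxab
  push_neg at hxab
  rw [Set.mem_symmDiff, mem_swap_image, Equiv.swap_apply_of_ne_of_ne hxab.1 hxab.2] at hx
  tauto

lemma swap_allowable [DecidableEq α] {κ : Cardinal.{u}} (hκ : ℵ₀ < κ) (ℒ : Set (Set α))
    (a b : α) : Allowable κ ℒ (Equiv.swap a b) := fun L hL =>
  ⟨L, hL, smallSet_of_finite hκ
    (((Set.finite_singleton b).insert a).subset (swap_image_symmDiff_subset a b L))⟩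

lemma image_sUnion_eq {ρ : Equiv.Perm α} {D : Set (Set α)}
    (h : ∀ L ∈ D, ρ '' L = L) : ρ '' ⋃₀ D = ⋃₀ D := by
  ext x
  constructor
  · rintro ⟨y, ⟨L, hL, hy⟩, rfl⟩
    exact ⟨L, hL, by rw [← h L hL]; exact ⟨y, hy, rfl⟩⟩
  · rintro ⟨L, hL, hx⟩
    rw [← h L hL] at hx
    obtain ⟨y, hy, rfl⟩ := hx
    exact ⟨y, ⟨L, hL, hy⟩, rfl⟩

lemma swap_image_eq [DecidableEq α] {a b : α} {L : Set α} (h : a ∈ L ↔ b ∈ L) :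
    Equiv.swap a b '' L = L := by
  ext x
  rw [mem_swap_image]
  rcases eq_or_ne x a with rfl | hxa
  · rw [Equiv.swap_apply_left]; exact h.symm
  rcases eq_or_ne x b with rfl | hxb
  · rw [Equiv.swap_apply_right]; exact h
  · rw [Equiv.swap_apply_of_ne_of_ne hxa hxb]

/-- A subset `X` of `α` is symmetric (has a support) if and only if there is a set `C`
of litters, either small or co-small in `ℒ`, such that the symmetric difference of `X`
with the union of `C` is small. -/
theorem symmetric_iff_near_union_of_litters
    (κ : Cardinal.{u}) (hreg : κ.IsRegular) (hunc : ℵ₀ < κ)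
    (α : Type u) (ℒ : Set (Set α)) (hpart : Setoid.IsPartition ℒ)
    (hsize : ∀ L ∈ ℒ, #L = κ) (X : Set α) :
    (∃ S T, IsSupport κ ℒ X S T) ↔
      ∃ C ⊆ ℒ, (SmallSet κ C ∨ SmallSet κ (ℒ \ C)) ∧
        SmallSet κ (symmDiff X (⋃₀ C)) := by
  classical
  have huniq : ∀ {L L' : Set α}, L ∈ ℒ → L' ∈ ℒ → ∀ {x : α}, x ∈ L → x ∈ L' → L = L' := by
    intro L L' hL hL' x hx hx'
    obtain ⟨B, -, hB⟩ := hpart.2 x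
    rw [hB L ⟨hL, hx⟩, hB L' ⟨hL', hx'⟩]
  constructor
  · rintro ⟨S, T, hSsmall, hTsub, hTsmall, hfix⟩
    -- Key dichotomy: for each litter, either its intersection with X or its
    -- complement in X is contained in S.
    have key : ∀ L ∈ ℒ, L ∩ X ⊆ S ∨ L \ X ⊆ S := by
      intro L hL
      by_contra h
      push_neg at h
      obtain ⟨h1, h2⟩ := h
      obtain ⟨a, ⟨haL, haX⟩, haS⟩ := not_subset.1 h1
      obtain ⟨b, ⟨hbL, hbX⟩, hbS⟩ := not_subset.1 h2
      have hfixT : ∀ M ∈ T, Equiv.swap a b '' M = M := by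
        intro M hM
        refine swap_image_eq ?_
        constructor
        · intro haM; rw [huniq (hTsub hM) hL haM haL]; exact hbL
        · intro hbM; rw [huniq (hTsub hM) hL hbM hbL]; exact haL
      have := hfix (Equiv.swap a b) (swap_allowable hunc ℒ a b)
        (fun s hs => Equiv.swap_apply_of_ne_of_ne
          (fun h => haS (h ▸ hs)) (fun h => hbS (h ▸ hs))) hfixT
      have hb : b ∈ X := by
        rw [← this]
        exact ⟨a, haX, Equiv.swap_apply_left a b⟩
      exact hbX hb
    set C : Set (Set α) := {L ∈ ℒ | SmallSet κ (L \ X)} with hCdef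
    have hCsub : C ⊆ ℒ := fun L hL => hL.1
    -- For litters in C, the part outside X is inside S.
    have key2 : ∀ L ∈ C, L \ X ⊆ S := by
      rintro L ⟨hL, hLsmall⟩
      rcases key L hL with h | h
      · exfalso
        have : #L ≤ #(L ∩ X : Set α) + #(L \ X : Set α) := by
          conv_lhs => rw [← Set.inter_union_diff L X]
          exact Cardinal.mk_union_le _ _
        have hlt : #(L ∩ X : Set α) + #(L \ X : Set α) < κ :=
          Cardinal.add_lt_of_lt hreg.aleph0_le (smallSet_mono h hSsmall) hLsmall
        rw [hsize L hL] at this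
        exact absurd (lt_of_le_of_lt this hlt) (lt_irrefl κ)
      · exact h
    -- For litters outside C, the part inside X is inside S.
    have key3 : ∀ L ∈ ℒ \ C, L ∩ X ⊆ S := by
      rintro L ⟨hL, hLC⟩
      rcases key L hL with h | h
      · exact h
      · exact absurd ⟨hL, smallSet_mono h hSsmall⟩ hLC
    have hdiff : symmDiff X (⋃₀ C) ⊆ S := by
      intro x hx
      rw [Set.mem_symmDiff] at hx
      rcases hx with ⟨hxX, hxU⟩ | ⟨hxU, hxX⟩
      · obtain ⟨L, ⟨hL, hxL⟩, -⟩ := hpart.2 x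
        have hLC : L ∉ C := fun hLC => hxU ⟨L, hLC, hxL⟩
        exact key3 L ⟨hL, hLC⟩ ⟨hxL, hxX⟩
      · obtain ⟨L, hLC, hxL⟩ := hxU
        exact key2 L hLC ⟨hxL, hxX⟩
    refine ⟨C, hCsub, ?_, smallSet_mono hdiff hSsmall⟩
    -- C is small or co-small.
    by_contra hbig
    push_neg at hbig
    obtain ⟨hC1, hC2⟩ := hbig
    -- the litters meeting S form a small family
    have hM : SmallSet κ {L ∈ ℒ | (L ∩ S).Nonempty} := by
      have hex : ∀ L : {L ∈ ℒ | (L ∩ S).Nonempty}, ∃ x : S, (x : α) ∈ (L : Set α) := by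
        rintro ⟨L, hLℒ, x, hxL, hxS⟩
        exact ⟨⟨x, hxS⟩, hxL⟩
      choose f hf using hex
      have hinj : Function.Injective f := by
        rintro ⟨L, hL⟩ ⟨L', hL'⟩ h
        have h1 := hf ⟨L, hL⟩
        have h2 := hf ⟨L', hL'⟩
        rw [h] at h1
        exact Subtype.ext (huniq hL.1 hL'.1 h1 h2)
      exact lt_of_le_of_lt (Cardinal.mk_le_of_injective hinj) hSsmall
    have hbad : SmallSet κ ({L ∈ ℒ | (L ∩ S).Nonempty} ∪ T) :=
      lt_of_le_of_lt (Cardinal.mk_union_le _ _)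
        (Cardinal.add_lt_of_lt hreg.aleph0_le hM hTsmall)
    obtain ⟨L₁, hL₁C, hL₁bad⟩ := not_subset.1
      (fun h => hC1 (smallSet_mono h hbad) : ¬ C ⊆ {L ∈ ℒ | (L ∩ S).Nonempty} ∪ T)
    obtain ⟨L₂, hL₂C, hL₂bad⟩ := not_subset.1
      (fun h => hC2 (smallSet_mono h hbad) : ¬ ℒ \ C ⊆ {L ∈ ℒ | (L ∩ S).Nonempty} ∪ T)
    have hL₁S : L₁ ∩ S = ∅ := by
      by_contra h
      exact hL₁bad (Or.inl ⟨hCsub hL₁C, Set.nonempty_iff_ne_empty.2 h⟩)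
    have hL₂S : L₂ ∩ S = ∅ := by
      by_contra h
      exact hL₂bad (Or.inl ⟨hL₂C.1, Set.nonempty_iff_ne_empty.2 h⟩)
    have hL₁T : L₁ ∉ T := fun h => hL₁bad (Or.inr h)
    have hL₂T : L₂ ∉ T := fun h => hL₂bad (Or.inr h)
    -- L₁ is contained in X, L₂ is disjoint from X
    have hL₁X : L₁ ⊆ X := by
      intro y hy
      by_contra hyX
      exact absurd hL₁S (Set.nonempty_iff_ne_empty.1 ⟨y, hy, key2 L₁ hL₁C ⟨hy, hyX⟩⟩)
    have hL₂X : L₂ ∩ X = ∅ := by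
      rw [← Set.subset_empty_iff, ← hL₂S]
      exact fun y hy => ⟨hy.1, key3 L₂ hL₂C hy⟩
    have hL₁ne : L₁.Nonempty := Set.nonempty_iff_ne_empty.2
      (fun h => hpart.1 (h ▸ hCsub hL₁C))
    have hL₂ne : L₂.Nonempty := Set.nonempty_iff_ne_empty.2
      (fun h => hpart.1 (h ▸ hL₂C.1))
    obtain ⟨a, ha⟩ := hL₁ne
    obtain ⟨b, hb⟩ := hL₂ne
    have haX : a ∈ X := hL₁X ha
    have hbX : b ∉ X := fun h => (Set.eq_empty_iff_forall_notMem.1 hL₂X b) ⟨hb, h⟩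
    have haS : a ∉ S := fun h => (Set.eq_empty_iff_forall_notMem.1 hL₁S a) ⟨ha, h⟩
    have hbS : b ∉ S := fun h => (Set.eq_empty_iff_forall_notMem.1 hL₂S b) ⟨hb, h⟩
    have hfixT : ∀ M ∈ T, Equiv.swap a b '' M = M := by
      intro M hM
      refine swap_image_eq ?_
      constructor
      · intro haM
        exact absurd hM (huniq (hTsub hM) (hCsub hL₁C) haM ha ▸ hL₁T)
      · intro hbM
        exact absurd hM (huniq (hTsub hM) hL₂C.1 hbM hb ▸ hL₂T)
    have := hfix (Equiv.swap a b) (swap_allowable hunc ℒ a b)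
      (fun s hs => Equiv.swap_apply_of_ne_of_ne
        (fun h => haS (h ▸ hs)) (fun h => hbS (h ▸ hs))) hfixT
    have hb' : b ∈ X := by
      rw [← this]
      exact ⟨a, haX, Equiv.swap_apply_left a b⟩
    exact hbX hb'
  · rintro ⟨C, hCsub, hsmall, hdiff⟩
    -- the support will be the symmetric difference together with C (or its complement)
    set S : Set α := symmDiff X (⋃₀ C) with hSdef
    have keyfix : ∀ ρ : Equiv.Perm α, (∀ a ∈ S, ρ a = a) →
        ρ '' ⋃₀ C = ⋃₀ C → ρ '' X = X := by
      intro ρ hS hU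
      have hSimg : ρ '' S = S := by
        rw [Set.image_congr hS, Set.image_id']
      have hX : X = symmDiff S (⋃₀ C) := by
        rw [hSdef, symmDiff_symmDiff_cancel_right]
      rw [hX, Set.image_symmDiff ρ.injective, hSimg, hU]
    rcases hsmall with hCsmall | hCcosmall
    · exact ⟨S, C, hdiff, hCsub, hCsmall,
        fun ρ _ hS hT => keyfix ρ hS (image_sUnion_eq hT)⟩
    · refine ⟨S, ℒ \ C, hdiff, Set.diff_subset, hCcosmall, fun ρ _ hS hT => keyfix ρ hS ?_⟩
      have hcompl : ⋃₀ C = (⋃₀ (ℒ \ C))ᶜ := by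
        ext x
        simp only [Set.mem_compl_iff, Set.mem_sUnion]
        constructor
        · rintro ⟨L, hL, hx⟩ ⟨L', hL', hx'⟩
          exact hL'.2 (huniq hL'.1 (hCsub hL) hx' hx ▸ hL)
        · intro h
          obtain ⟨L, ⟨hL, hxL⟩, -⟩ := hpart.2 x
          by_cases hLC : L ∈ C
          · exact ⟨L, hLC, hxL⟩
          · exact absurd ⟨L, ⟨hL, hLC⟩, hxL⟩ h
      rw [hcompl, Set.image_compl_eq ρ.bijective, image_sUnion_eq hT]

end NFPaper
end

section
/- If a subset X of α has a support, then no litter is cut by X into two large pieces: for every litter L, either L ∩ X is small or L ∖ X is small. -/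
open Cardinal Set

universe u

namespace NFPaper

variable {α : Type u}

/-- If a subset `X` of `α` has a support, then no litter is cut by `X` into two large
pieces: for every litter `L`, either `L ∩ X` is small or `L \ X` is small. -/
theorem no_litter_cut_into_two_large_pieces
    (κ : Cardinal.{u}) (hreg : κ.IsRegular) (hunc : ℵ₀ < κ)
    (α : Type u) (ℒ : Set (Set α)) (hpart : Setoid.IsPartition ℒ)
    (hsize : ∀ L ∈ ℒ, #L = κ) (X : Set α)
    (hX : ∃ S T, IsSupport κ ℒ X S T) :
    ∀ L ∈ ℒ, SmallSet κ (L ∩ X) ∨ SmallSet κ (L \ X) := by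
  intro L hL
  by_contra h
  push_neg at h
  obtain ⟨h1, h2⟩ := h
  obtain ⟨S, T, hSsmall, hTL, hTsmall, hfix⟩ := hX
  have ha : ∃ a, a ∈ L ∩ X ∧ a ∉ S := by
    by_contra hc
    push_neg at hc
    exact h1 ((Cardinal.mk_le_mk_of_subset hc).trans_lt hSsmall)
  have hb : ∃ b, b ∈ L \ X ∧ b ∉ S := by
    by_contra hc
    push_neg at hc
    exact h2 ((Cardinal.mk_le_mk_of_subset hc).trans_lt hSsmall)
  obtain ⟨a, ⟨haL, haX⟩, haS⟩ := ha
  obtain ⟨b, ⟨hbL, hbX⟩, hbS⟩ := hb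
  classical
  set ρ := Equiv.swap a b with hρ
  have hswap_img : ∀ Y : Set α, a ∈ Y → b ∈ Y → ρ '' Y = Y := by
    intro Y haY hbY
    ext x
    simp only [Set.mem_image]
    constructor
    · rintro ⟨y, hy, rfl⟩
      rcases eq_or_ne y a with rfl | hya
      · simpa [hρ, Equiv.swap_apply_left] using hbY
      rcases eq_or_ne y b with rfl | hyb
      · simpa [hρ, Equiv.swap_apply_right] using haY
      · rwa [show ρ y = y from Equiv.swap_apply_of_ne_of_ne hya hyb]
    · intro hx
      by_cases hxa : x = a
      · exact ⟨b, hbY, by rw [hxa]; exact Equiv.swap_apply_right a b⟩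
      by_cases hxb : x = b
      · exact ⟨a, haY, by rw [hxb]; exact Equiv.swap_apply_left a b⟩
      · exact ⟨x, hx, Equiv.swap_apply_of_ne_of_ne hxa hxb⟩
  have hswap_fix : ∀ Y : Set α, a ∉ Y → b ∉ Y → ρ '' Y = Y := by
    intro Y haY hbY
    ext x
    simp only [Set.mem_image]
    constructor
    · rintro ⟨y, hy, rfl⟩
      rwa [show ρ y = y from
        Equiv.swap_apply_of_ne_of_ne (fun h => haY (h ▸ hy)) (fun h => hbY (h ▸ hy))]
    · intro hx
      exact ⟨x, hx,
        Equiv.swap_apply_of_ne_of_ne (fun h => haY (h ▸ hx)) (fun h => hbY (h ▸ hx))⟩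
  have hallow : Allowable κ ℒ ρ := by
    intro L' hL'
    refine ⟨L', hL', ?_⟩
    have hsub : symmDiff (ρ '' L') L' ⊆ {a, b} := by
      intro x hx
      rcases Set.mem_symmDiff.mp hx with ⟨⟨y, hy, rfl⟩, hx2⟩ | ⟨hx1, hx2⟩
      · rcases eq_or_ne y a with rfl | hya
        · right; simp [hρ, Equiv.swap_apply_left]
        rcases eq_or_ne y b with rfl | hyb
        · left; simp [hρ, Equiv.swap_apply_right]
        · exact absurd (by
            rw [show ρ y = y from Equiv.swap_apply_of_ne_of_ne hya hyb]; exact hy) hx2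
      · by_cases hxa : x = a
        · exact Or.inl hxa
        by_cases hxb : x = b
        · exact Or.inr hxb
        · exact absurd ⟨x, hx1, Equiv.swap_apply_of_ne_of_ne hxa hxb⟩ hx2
    have hfin : (symmDiff (ρ '' L') L').Finite :=
      ((Set.finite_singleton b).insert a).subset hsub
    exact lt_trans (Cardinal.lt_aleph0_iff_set_finite.mpr hfin) hunc
  have hSfix : ∀ s ∈ S, ρ s = s := fun s hs =>
    Equiv.swap_apply_of_ne_of_ne (fun h => haS (h ▸ hs)) (fun h => hbS (h ▸ hs))
  have hTfix : ∀ L' ∈ T, ρ '' L' = L' := by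
    intro L' hL'T
    rcases eq_or_ne L' L with rfl | hne
    · exact hswap_img L' haL hbL
    · have hdisj : Disjoint L' L :=
        hpart.pairwiseDisjoint (hTL hL'T) hL hne
      exact hswap_fix L' (fun h => (Set.disjoint_left.mp hdisj h) haL)
        (fun h => (Set.disjoint_left.mp hdisj h) hbL)
  have hXfix := hfix ρ hallow hSfix hTfix
  have : b ∈ X := by
    rw [← hXfix]
    exact ⟨a, haX, Equiv.swap_apply_left a b⟩
  exact hbX this

end NFPaper
end

section
/- If a subset X of α has a support, then the set of litters cut by X is small: the collection of litters L such that both L ∩ X and L ∖ X are nonempty has cardinality less than κ. -/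
open Cardinal Set

universe u

namespace NFPaper

variable {α : Type u}

/-- If a subset `X` of `α` has a support, then the set of litters cut by `X` (those
`L ∈ ℒ` with both `L ∩ X` and `L \ X` nonempty) is small. -/
theorem set_of_cut_litters_small
    (κ : Cardinal.{u}) (hreg : κ.IsRegular) (hunc : ℵ₀ < κ)
    (α : Type u) (ℒ : Set (Set α)) (hpart : Setoid.IsPartition ℒ)
    (hsize : ∀ L ∈ ℒ, #L = κ) (X : Set α)
    (hX : ∃ S T, IsSupport κ ℒ X S T) :
    SmallSet κ {L | L ∈ ℒ ∧ (L ∩ X).Nonempty ∧ (L \ X).Nonempty} := by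
  obtain ⟨S, T, hS, hTℒ, hT, hsupp⟩ := hX
  have huniq : ∀ ⦃L L' : Set α⦄, L ∈ ℒ → L' ∈ ℒ → ∀ x, x ∈ L → x ∈ L' → L = L' := by
    intro L L' hL hL' x hx hx'
    obtain ⟨B, _, hBu⟩ := hpart.2 x
    rw [hBu L ⟨hL, hx⟩, hBu L' ⟨hL', hx'⟩]
  have hsub : {L | L ∈ ℒ ∧ (L ∩ X).Nonempty ∧ (L \ X).Nonempty} ⊆
      T ∪ {L | L ∈ ℒ ∧ (L ∩ S).Nonempty} := by
    rintro L ⟨hLℒ, ⟨a, haL, haX⟩, ⟨b, hbL, hbX⟩⟩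
    by_contra hc
    simp only [Set.mem_union, Set.mem_setOf_eq, not_or, not_and] at hc
    obtain ⟨hLT, hLS⟩ := hc
    have hLSempty : ∀ x ∈ L, x ∉ S := by
      intro x hx hxS
      exact hLS hLℒ ⟨x, hx, hxS⟩
    have hab : a ≠ b := fun h => hbX (h ▸ haX)
    letI : DecidableEq α := Classical.decEq α
    set ρ : Equiv.Perm α := Equiv.swap a b with hρ
    have hallow : Allowable κ ℒ ρ := by
      intro L' hL'
      refine ⟨L', hL', ?_⟩
      have hsd : symmDiff (ρ '' L') L' ⊆ {a, b} := by
        intro x hx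
        rcases hx with ⟨⟨y, hy, hyx⟩, hxn⟩ | ⟨hxL, hxn⟩
        · by_contra hxab
          simp only [Set.mem_insert_iff, Set.mem_singleton_iff, not_or] at hxab
          have : y = x := by
            by_contra hyn
            have hy1 : y ≠ a := fun h => by
              subst h; rw [Equiv.swap_apply_left] at hyx; exact hxab.2 hyx.symm
            have hy2 : y ≠ b := fun h => by
              subst h; rw [Equiv.swap_apply_right] at hyx; exact hxab.1 hyx.symm
            rw [Equiv.swap_apply_of_ne_of_ne hy1 hy2] at hyx
            exact hyn hyx
          exact hxn (this ▸ hy)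
        · by_contra hxab
          simp only [Set.mem_insert_iff, Set.mem_singleton_iff, not_or] at hxab
          have : ρ x = x := Equiv.swap_apply_of_ne_of_ne hxab.1 hxab.2
          exact hxn ⟨x, hxL, this⟩
      have : #(symmDiff (ρ '' L') L' : Set α) < ℵ₀ :=
        (Set.Finite.subset ((Set.finite_singleton b).insert a) hsd).lt_aleph0
      exact this.trans hunc
    have hfixS : ∀ s ∈ S, ρ s = s := by
      intro s hs
      refine Equiv.swap_apply_of_ne_of_ne (fun h => ?_) (fun h => ?_)
      · exact hLSempty a haL (h ▸ hs)
      · exact hLSempty b hbL (h ▸ hs)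
    have hfixT : ∀ L' ∈ T, ρ '' L' = L' := by
      intro L' hL'T
      have hL'ℒ : L' ∈ ℒ := hTℒ hL'T
      have hne : L ≠ L' := fun h => hLT (h ▸ hL'T)
      have hfix : ∀ x ∈ L', ρ x = x := by
        intro x hx
        refine Equiv.swap_apply_of_ne_of_ne (fun h => ?_) (fun h => ?_)
        · exact hne (huniq hLℒ hL'ℒ a haL (h ▸ hx))
        · exact hne (huniq hLℒ hL'ℒ b hbL (h ▸ hx))
      calc ρ '' L' = id '' L' := Set.image_congr hfix
        _ = L' := Set.image_id L'
    have hXfix : ρ '' X = X := hsupp ρ hallow hfixS hfixT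
    have : b ∈ X := by
      rw [← hXfix]
      exact ⟨a, haX, Equiv.swap_apply_left a b⟩
    exact hbX this
  have hmeet : SmallSet κ {L | L ∈ ℒ ∧ (L ∩ S).Nonempty} := by
    have hsub2 : {L | L ∈ ℒ ∧ (L ∩ S).Nonempty} ⊆
        Set.range (fun s : S => (hpart.2 (s : α)).choose) := by
      rintro L ⟨hLℒ, ⟨x, hxL, hxS⟩⟩
      refine ⟨⟨x, hxS⟩, ?_⟩
      obtain ⟨hmem, _⟩ := (hpart.2 x).choose_spec
      exact (huniq hmem.1 hLℒ x hmem.2 hxL)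
    calc #{L | L ∈ ℒ ∧ (L ∩ S).Nonempty}
        ≤ #(Set.range (fun s : S => (hpart.2 (s : α)).choose)) :=
          Cardinal.mk_le_mk_of_subset hsub2
      _ ≤ #S := Cardinal.mk_range_le
      _ < κ := hS
  calc #{L | L ∈ ℒ ∧ (L ∩ X).Nonempty ∧ (L \ X).Nonempty}
      ≤ #(T ∪ {L | L ∈ ℒ ∧ (L ∩ S).Nonempty} : Set (Set α)) :=
        Cardinal.mk_le_mk_of_subset hsub
    _ ≤ #T + #{L | L ∈ ℒ ∧ (L ∩ S).Nonempty} := Cardinal.mk_union_le _ _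
    _ < κ := Cardinal.add_lt_of_lt hreg.aleph0_le hT hmeet

end NFPaper
end

section
/- (Clan subset support lemma.) If (S, T) is a support of a subset X of α, then X is expressible from the support itself: there exist a set D ⊆ S and a set Y ⊆ T such that either X equals the symmetric difference of D with the union of Y, or X equals the symmetric difference of D with the complement of the union of Y. -/
open Cardinal Set

universe u

namespace NFPaper

variable {α : Type u}

/-- `(S, T)` is a support of `X ⊆ α` (near-litter version): `S` is a small set of
elements of `α`, `T` is a small set of pairwise disjoint near-litters, and every
allowable permutation fixing every element of `S` and fixing every near-litter in `T`
setwise fixes `X` setwise. -/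
def IsSupportN (κ : Cardinal.{u}) (ℒ : Set (Set α)) (X : Set α)
    (S : Set α) (T : Set (Set α)) : Prop :=
  SmallSet κ S ∧ (∀ N ∈ T, IsNearLitter κ ℒ N) ∧ T.Pairwise Disjoint ∧ SmallSet κ T ∧
    ∀ ρ : Equiv.Perm α, Allowable κ ℒ ρ →
      (∀ a ∈ S, ρ a = a) → (∀ N ∈ T, ρ '' N = N) → ρ '' X = X

/-- Clan subset support lemma: if `(S, T)` is a support of `X ⊆ α`, then `X` is
expressible from the support itself: there are `D ⊆ S` and `Y ⊆ T` such that `X` is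
the symmetric difference of `D` with the union of `Y`, or the symmetric difference of
`D` with the complement of the union of `Y`. -/
theorem clan_subset_support_lemma
    (κ : Cardinal.{u}) (hreg : κ.IsRegular) (hunc : ℵ₀ < κ)
    (α : Type u) (ℒ : Set (Set α)) (hpart : Setoid.IsPartition ℒ)
    (hsize : ∀ L ∈ ℒ, #L = κ) (X : Set α) (S : Set α) (T : Set (Set α))
    (hsupp : IsSupportN κ ℒ X S T) :
    ∃ D ⊆ S, ∃ Y ⊆ T,
      X = symmDiff D (⋃₀ Y) ∨ X = symmDiff D (⋃₀ Y)ᶜ := by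
  classical
  obtain ⟨hS, hNL, hdisj, hT, hfix⟩ := hsupp
  -- Homogeneity: points outside S with the same membership pattern on T behave alike for X.
  have hom : ∀ a b : α, a ∉ S → b ∉ S → (∀ N ∈ T, (a ∈ N ↔ b ∈ N)) → (a ∈ X ↔ b ∈ X) := by
    intro a b ha hb hab
    rcases eq_or_ne a b with rfl | hne
    · rfl
    set ρ := Equiv.swap a b with hρ
    have hρX : ρ '' X = X := by
      apply hfix
      · intro L hL
        refine ⟨L, hL, ?_⟩
        have hsub : symmDiff (ρ '' L) L ⊆ {a, b} := by
          intro x hx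
          by_contra hx'
          simp only [mem_insert_iff, mem_singleton_iff, not_or] at hx'
          have hfx : ρ x = x := Equiv.swap_apply_of_ne_of_ne hx'.1 hx'.2
          have hiff : x ∈ ρ '' L ↔ x ∈ L := by
            constructor
            · rintro ⟨y, hy, hyx⟩
              have : y = x := ρ.injective (by rw [hyx, hfx])
              rwa [← this]
            · intro hxL; exact ⟨x, hxL, hfx⟩
          rcases hx with hx | hx
          · exact hx.2 (hiff.mp hx.1)
          · exact hx.2 (hiff.mpr hx.1)
        have hfin : ({a, b} : Set α).Finite := (finite_singleton b).insert a
        exact lt_of_lt_of_le ((hfin.subset hsub).lt_aleph0) hunc.le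
      · intro s hs
        exact Equiv.swap_apply_of_ne_of_ne (fun h => ha (h ▸ hs)) (fun h => hb (h ▸ hs))
      · intro N hNT
        have hNab := hab N hNT
        ext x
        constructor
        · rintro ⟨y, hy, rfl⟩
          rcases eq_or_ne y a with rfl | hya
          · simpa [hρ, Equiv.swap_apply_left] using hNab.mp hy
          rcases eq_or_ne y b with rfl | hyb
          · simpa [hρ, Equiv.swap_apply_right] using hNab.mpr hy
          · rwa [show ρ y = y from Equiv.swap_apply_of_ne_of_ne hya hyb]
        · intro hx
          rcases eq_or_ne x a with rfl | hxa
          · exact ⟨b, hNab.mp hx, Equiv.swap_apply_right x b⟩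
          rcases eq_or_ne x b with rfl | hxb
          · exact ⟨a, hNab.mpr hx, Equiv.swap_apply_left a x⟩
          · exact ⟨x, hx, Equiv.swap_apply_of_ne_of_ne hxa hxb⟩
    constructor
    · intro haX
      have : ρ a ∈ ρ '' X := mem_image_of_mem ρ haX
      rwa [hρX, show ρ a = b from Equiv.swap_apply_left a b] at this
    · intro hbX
      have : ρ b ∈ ρ '' X := mem_image_of_mem ρ hbX
      rwa [hρX, show ρ b = a from Equiv.swap_apply_right a b] at this
  -- Points in the same near-litter have the same membership pattern (by disjointness).
  have same_pattern : ∀ N ∈ T, ∀ x y : α, x ∈ N → y ∈ N → ∀ M ∈ T, (x ∈ M ↔ y ∈ M) := by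
    intro N hNT x y hxN hyN M hMT
    by_cases hMN : M = N
    · subst hMN; exact iff_of_true hxN hyN
    · constructor
      · intro hxM
        exact absurd hxN (Set.disjoint_left.mp (hdisj hMT hNT hMN) hxM)
      · intro hyM
        exact absurd hyN (Set.disjoint_left.mp (hdisj hMT hNT hMN) hyM)
  -- Key set identity: if X and B agree outside S, then X = ((X △ B) ∩ S) △ B.
  have key : ∀ B : Set α, (∀ x, x ∉ S → (x ∈ X ↔ x ∈ B)) →
      X = symmDiff ((symmDiff X B) ∩ S) B := by
    intro B hB
    ext x
    by_cases hx : x ∈ S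
    · simp only [Set.mem_symmDiff, mem_inter_iff]
      tauto
    · have := hB x hx
      simp only [Set.mem_symmDiff, mem_inter_iff]
      tauto
  by_cases hcase : ∃ a, a ∉ S ∧ (∀ N ∈ T, a ∉ N) ∧ a ∈ X
  · -- The "remainder" meets X, hence is contained in X: use the complement form.
    obtain ⟨a, haS, haT, haX⟩ := hcase
    set Y := {N ∈ T | ∃ x ∈ N, x ∉ S ∧ x ∉ X} with hY
    refine ⟨(symmDiff X (⋃₀ Y)ᶜ) ∩ S, inter_subset_right, Y, fun N hN => hN.1, Or.inr ?_⟩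
    apply key
    intro x hxS
    rw [mem_compl_iff]
    constructor
    · intro hxX hxY
      obtain ⟨N, ⟨hNT, y, hyN, hyS, hyX⟩, hxN⟩ := hxY
      exact hyX ((hom x y hxS hyS (same_pattern N hNT x y hxN hyN)).mp hxX)
    · intro hxY
      by_cases hxT : ∃ N ∈ T, x ∈ N
      · obtain ⟨N, hNT, hxN⟩ := hxT
        by_contra hxX
        exact hxY ⟨N, ⟨hNT, x, hxN, hxS, hxX⟩, hxN⟩
      · push_neg at hxT
        exact (hom x a hxS haS (fun M hM => iff_of_false (hxT M hM) (haT M hM))).mpr haX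
  · -- The remainder avoids X: use the union form.
    set Y := {N ∈ T | ∃ x ∈ N, x ∉ S ∧ x ∈ X} with hY
    refine ⟨(symmDiff X (⋃₀ Y)) ∩ S, inter_subset_right, Y, fun N hN => hN.1, Or.inl ?_⟩
    apply key
    intro x hxS
    constructor
    · intro hxX
      by_cases hxT : ∃ N ∈ T, x ∈ N
      · obtain ⟨N, hNT, hxN⟩ := hxT
        exact ⟨N, ⟨hNT, x, hxN, hxS, hxX⟩, hxN⟩
      · push_neg at hxT
        exact absurd ⟨x, hxS, hxT, hxX⟩ hcase
    · rintro ⟨N, ⟨hNT, y, hyN, hyS, hyX⟩, hxN⟩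
      exact (hom x y hxS hyS (same_pattern N hNT x y hxN hyN)).mpr hyX

end NFPaper
end

section
/- If α has cardinality μ, then the set of all near-litters in α has cardinality exactly μ. -/
open Cardinal Set

universe u

namespace NFPaper

variable {α : Type u}

/-!
A near-litter `N` is determined by a litter `L` and the small set `N ∆ L`, so there are at
most `#ℒ * #{small sets} ≤ μ * μ = μ` of them: a partition of `α` has at most `#α` parts, and
since `κ ≤ cof μ` and `μ` is a strong limit, `α` has only `μ` subsets of size `< κ`.
Conversely, for a fixed litter `L` the near-litters `L ∆ {a}` are pairwise distinct.
-/

theorem _root_.Setoid.IsPartition.mk_le {c : Set (Set α)} (hc : Setoid.IsPartition c) :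
    #c ≤ #α := by
  choose pt hpt using fun s : c =>
    (nonempty_iff_ne_empty.2 fun h => hc.1 (h ▸ s.2) : ∃ a, a ∈ (s : Set α))
  refine mk_le_of_injective (f := pt) fun s t hst => Subtype.ext ?_
  exact (hc.2 (pt s)).unique ⟨s.2, hpt s⟩ ⟨t.2, hst ▸ hpt t⟩

theorem mk_subtype_mk_lt_le {κ : Cardinal.{u}} (hα : IsStrongPrelimit #α)
    (hκ : κ ≤ (#α).ord.cof) : #{s : Set α // #s < κ} ≤ #α :=
  (mk_subtype_mono fun _ (hs : _ < κ) => hs.trans_le hκ).trans (mk_subset_mk_lt_cof hα).le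

theorem mk_setOf_isNearLitter_le (κ : Cardinal.{u}) (ℒ : Set (Set α)) :
    #{N | IsNearLitter κ ℒ N} ≤ #ℒ * #{s : Set α // #s < κ} := by
  rw [← lift_id #ℒ, ← lift_id #{s : Set α // #s < κ}, ← mk_prod]
  refine mk_le_of_surjective
    (f := fun p => ⟨symmDiff p.2.1 p.1, p.1, p.1.2, by simpa [SmallSet] using p.2.2⟩) ?_
  rintro ⟨N, L, hL, hsmall⟩
  exact ⟨(⟨L, hL⟩, ⟨symmDiff N L, hsmall⟩), Subtype.ext (symmDiff_symmDiff_cancel_right _ _)⟩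

theorem mk_le_mk_setOf_isNearLitter {κ : Cardinal.{u}} {ℒ : Set (Set α)}
    (hℒ : ℒ.Nonempty) (hκ : 1 < κ) : #α ≤ #{N | IsNearLitter κ ℒ N} := by
  obtain ⟨L, hL⟩ := hℒ
  have hnear (a : α) : IsNearLitter κ ℒ (symmDiff {a} L) :=
    ⟨L, hL, by simpa [SmallSet, symmDiff_symmDiff_cancel_right] using hκ⟩
  refine mk_le_of_injective (f := fun a => ⟨symmDiff {a} L, hnear a⟩) fun a b hab => ?_
  exact singleton_injective (symmDiff_left_injective L (congrArg Subtype.val hab))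

theorem card_near_litters_general
    (κ μ : Cardinal.{u}) (hunc : ℵ₀ < κ)
    (hsl : μ.IsStrongLimit) (hcof : κ ≤ μ.ord.cof)
    (α : Type u) (hα : #α = μ)
    (ℒ : Set (Set α)) (hpart : Setoid.IsPartition ℒ) :
    #{N : Set α | IsNearLitter κ ℒ N} = μ := by
  subst hα
  have : Nonempty α := mk_ne_zero_iff.1 hsl.ne_zero
  have hℒ : ℒ.Nonempty :=
    let ⟨L, ⟨hL, _⟩, _⟩ := hpart.2 (Classical.arbitrary α)
    ⟨L, hL⟩
  refine le_antisymm ?_ (mk_le_mk_setOf_isNearLitter hℒ (one_lt_aleph0.trans hunc))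
  calc #{N | IsNearLitter κ ℒ N} ≤ #ℒ * #{s : Set α // #s < κ} := mk_setOf_isNearLitter_le κ ℒ
    _ ≤ #α * #α := mul_le_mul' hpart.mk_le (mk_subtype_mk_lt_le hsl.isStrongPrelimit hcof)
    _ = #α := mul_eq_self hsl.aleph0_le

/-- If `κ` is an uncountable regular cardinal, `μ` is a strong limit cardinal with
`κ < μ` and cofinality at least `κ`, and `α` has cardinality `μ`, then the set of all
near-litters in `α` has cardinality exactly `μ`. -/
theorem card_near_litters
    (κ μ : Cardinal.{u}) (hreg : κ.IsRegular) (hunc : ℵ₀ < κ)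
    (hsl : μ.IsStrongLimit) (hκμ : κ < μ) (hcof : κ ≤ μ.ord.cof)
    (α : Type u) (hα : #α = μ)
    (ℒ : Set (Set α)) (hpart : Setoid.IsPartition ℒ)
    (hsize : ∀ L ∈ ℒ, #L = κ) :
    #{N : Set α | IsNearLitter κ ℒ N} = μ :=
  card_near_litters_general κ μ hunc hsl hcof α hα ℒ hpart

end NFPaper
end

section
/- If α has cardinality μ, then the set of subsets of α having small symmetric difference from the union of a small or co-small collection of litters, that is {X ⊆ α : ∃ C ⊆ ℒ, (|C| < κ or |ℒ ∖ C| < κ) and |X Δ ⋃C| < κ}, has cardinality exactly μ. -/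
open Cardinal Set

universe u

namespace NFPaper

variable {α : Type u}

variable {α : Type u}


/-- Small subsets of a type of cardinality `μ` number at most `μ`. -/
theorem aux_small_subsets (κ μ : Cardinal.{u}) (hsl : μ.IsStrongLimit)
    (hcof : κ ≤ μ.ord.cof) (β : Type u) (hβ : #β = μ) :
    #{s : Set β | #s < κ} ≤ μ := by
  have h := Cardinal.mk_subset_mk_lt_cof (α := β)
    (by rw [hβ]; exact fun x hx => hsl.two_power_lt hx)
  rw [hβ] at h
  refine le_trans ?_ h.le
  apply mk_le_mk_of_subset
  intro s hs
  show #s < μ.ord.cof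
  exact hs.trans_le hcof

theorem aux_mk_parts (κ μ : Cardinal.{u}) (hunc : ℵ₀ < κ) (hκμ : κ < μ)
    (β : Type u) (hβ : #β = μ) (ℒ : Set (Set β)) (hpart : Setoid.IsPartition ℒ)
    (hsize : ∀ L ∈ ℒ, #L = κ) : #ℒ = μ := by
  have hμ0 : μ ≠ 0 := by
    rintro rfl; exact (Cardinal.zero_le _).not_gt (hunc.trans hκμ)
  have hβne : Nonempty β := by
    rw [← Cardinal.mk_ne_zero_iff, hβ]; exact hμ0
  -- choose a point in each litter
  have hchoice : ∀ L : ℒ, ∃ x : β, x ∈ (L : Set β) := by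
    rintro ⟨L, hL⟩
    rcases eq_empty_or_nonempty L with rfl | ⟨x, hx⟩
    · exact absurd hL hpart.1
    · exact ⟨x, hx⟩
  choose f hf using hchoice
  have hfinj : Function.Injective f := by
    rintro ⟨L₁, hL₁⟩ ⟨L₂, hL₂⟩ h
    obtain ⟨b, _, hb⟩ := hpart.2 (f ⟨L₁, hL₁⟩)
    have e1 := hb L₁ ⟨hL₁, hf ⟨L₁, hL₁⟩⟩
    have e2 := hb L₂ ⟨hL₂, h ▸ hf ⟨L₂, hL₂⟩⟩
    exact Subtype.ext (e1.trans e2.symm)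
  have hle : #ℒ ≤ μ := by rw [← hβ]; exact Cardinal.mk_le_of_injective hfinj
  refine le_antisymm hle ?_
  -- β = ⋃₀ ℒ
  have hcover : ⋃₀ ℒ = Set.univ := by
    ext x
    simp only [mem_sUnion, mem_univ, iff_true]
    obtain ⟨b, ⟨hb, hxb⟩, _⟩ := hpart.2 x
    exact ⟨b, hb, hxb⟩
  have : μ ≤ #ℒ * κ := by
    have h1 : μ = #(⋃₀ ℒ) := by rw [hcover]; simp [hβ]
    rw [h1]
    refine (Cardinal.mk_sUnion_le ℒ).trans ?_
    apply mul_le_mul_right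
    refine ciSup_le' ?_
    rintro ⟨L, hL⟩
    exact (hsize L hL).le
  rcases le_or_gt κ #ℒ with h | h
  · calc μ ≤ #ℒ * κ := this
      _ ≤ #ℒ * #ℒ := mul_le_mul_right h _
      _ ≤ #ℒ := (Cardinal.mul_eq_self (hunc.le.trans h)).le
  · exfalso
    have : μ ≤ κ * κ := this.trans (mul_le_mul_left h.le κ)
    rw [Cardinal.mul_eq_self hunc.le] at this
    exact absurd this (not_le.2 hκμ)
/-- If `κ` is an uncountable regular cardinal, `μ` is a strong limit cardinal with
`κ < μ` and cofinality at least `κ`, and `α` has cardinality `μ`, then the set of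
subsets of `α` having small symmetric difference from the union of a small or co-small
collection of litters has cardinality exactly `μ`. -/
theorem card_near_unions_of_litters
    (κ μ : Cardinal.{u}) (hreg : κ.IsRegular) (hunc : ℵ₀ < κ)
    (hsl : μ.IsStrongLimit) (hκμ : κ < μ) (hcof : κ ≤ μ.ord.cof)
    (α : Type u) (hα : #α = μ)
    (ℒ : Set (Set α)) (hpart : Setoid.IsPartition ℒ)
    (hsize : ∀ L ∈ ℒ, #L = κ) :
    #{X : Set α | ∃ C ⊆ ℒ, (SmallSet κ C ∨ SmallSet κ (ℒ \ C)) ∧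
        SmallSet κ (symmDiff X (⋃₀ C))} = μ := by
  have haleph : ℵ₀ ≤ μ := (hunc.trans hκμ).le
  set S := {X : Set α | ∃ C ⊆ ℒ, (SmallSet κ C ∨ SmallSet κ (ℒ \ C)) ∧
      SmallSet κ (symmDiff X (⋃₀ C))} with hS
  apply le_antisymm
  · -- upper bound
    have hwit : ∀ X : S, ∃ C, C ⊆ ℒ ∧ (SmallSet κ C ∨ SmallSet κ (ℒ \ C)) ∧
        SmallSet κ (symmDiff (X : Set α) (⋃₀ C)) := by
      rintro ⟨X, C, hC1, hC2, hC3⟩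
      exact ⟨C, hC1, hC2, hC3⟩
    choose Cf h1 h2 h3 using hwit
    set T1 : Set (Set (Set α)) := {C | C ⊆ ℒ ∧ (SmallSet κ C ∨ SmallSet κ (ℒ \ C))} with hT1def
    set T2 : Set (Set α) := {D | SmallSet κ D} with hT2def
    have hinj : Function.Injective
        (fun X : S => ((⟨Cf X, h1 X, h2 X⟩ : T1),
          (⟨symmDiff (X : Set α) (⋃₀ Cf X), h3 X⟩ : T2))) := by
      intro X Y h
      simp only [Prod.mk.injEq, Subtype.mk.injEq] at h
      obtain ⟨hC, hD⟩ := h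
      have : (X : Set α) = (Y : Set α) := by
        have := congrArg (fun t => symmDiff t (⋃₀ Cf X)) hD
        simpa [hC, symmDiff_symmDiff_cancel_right] using this
      exact Subtype.ext this
    have hle : #S ≤ #T1 * #T2 := by
      refine (Cardinal.mk_le_of_injective hinj).trans_eq ?_
      rw [Cardinal.mk_prod, Cardinal.lift_id, Cardinal.lift_id]
    have hT2 : #T2 ≤ μ := aux_small_subsets κ μ hsl hcof α hα
    have hℒ : #ℒ = μ := aux_mk_parts κ μ hunc hκμ α hα ℒ hpart hsize
    have hA : #{C : Set (Set α) | C ⊆ ℒ ∧ SmallSet κ C} ≤ μ := by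
      refine le_trans ?_ (aux_small_subsets κ μ hsl hcof ℒ hℒ)
      refine Cardinal.mk_le_of_injective
        (f := fun C : {C : Set (Set α) // C ⊆ ℒ ∧ SmallSet κ C} =>
          (⟨Subtype.val ⁻¹' (C : Set (Set α)), ?_⟩ : {s : Set ℒ | #s < κ})) ?_
      · have := Cardinal.mk_preimage_of_injective_of_subset_range
          (Subtype.val : ℒ → Set α) (C : Set (Set α)) Subtype.val_injective
          (by rw [Subtype.range_coe]; exact C.2.1)
        show #(Subtype.val ⁻¹' (C : Set (Set α))) < κ
        rw [this]; exact C.2.2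
      · rintro ⟨C, hC1, hC2⟩ ⟨C', hC'1, hC'2⟩ h
        simp only [Subtype.mk.injEq] at h
        refine Subtype.ext ?_
        refine (preimage_eq_preimage' ?_ ?_).1 h <;> rw [Subtype.range_coe] <;> assumption
    have hB : #{C : Set (Set α) | C ⊆ ℒ ∧ SmallSet κ (ℒ \ C)} ≤ μ := by
      refine le_trans ?_ hA
      refine Cardinal.mk_le_of_injective
        (f := fun C : {C : Set (Set α) // C ⊆ ℒ ∧ SmallSet κ (ℒ \ C)} =>
          (⟨ℒ \ (C : Set (Set α)), diff_subset, C.2.2⟩ :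
            {C : Set (Set α) | C ⊆ ℒ ∧ SmallSet κ C})) ?_
      rintro ⟨C, hC1, hC2⟩ ⟨C', hC'1, hC'2⟩ h
      simp only [Subtype.mk.injEq] at h
      refine Subtype.ext ?_
      have := congrArg (fun t => ℒ \ t) h
      simpa [Set.diff_diff_cancel_left hC1, Set.diff_diff_cancel_left hC'1] using this
    have hT1 : #T1 ≤ μ := by
      have hsub : T1 ⊆ {C : Set (Set α) | C ⊆ ℒ ∧ SmallSet κ C} ∪
          {C : Set (Set α) | C ⊆ ℒ ∧ SmallSet κ (ℒ \ C)} := by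
        rintro C ⟨hC1, hC2 | hC2⟩
        · exact Or.inl ⟨hC1, hC2⟩
        · exact Or.inr ⟨hC1, hC2⟩
      refine (Cardinal.mk_le_mk_of_subset hsub).trans ?_
      refine (Cardinal.mk_union_le _ _).trans ?_
      refine (add_le_add hA hB).trans ?_
      rw [Cardinal.add_eq_self haleph]
    refine hle.trans ?_
    calc #T1 * #T2 ≤ μ * μ := mul_le_mul' hT1 hT2
      _ = μ := Cardinal.mul_eq_self haleph
  · -- lower bound: singletons
    have hmem : ∀ x : α, ({x} : Set α) ∈ S := by
      intro x
      refine ⟨∅, empty_subset _, Or.inl ?_, ?_⟩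
      · unfold SmallSet
        simpa using (Cardinal.aleph0_pos.trans hunc)
      · unfold SmallSet
        have he : symmDiff ({x} : Set α) (⋃₀ ∅) = {x} := by
          simp [symmDiff]
        rw [he]
        simpa using (Cardinal.one_lt_aleph0.trans hunc)
    rw [← hα]
    refine Cardinal.mk_le_of_injective (f := fun x => (⟨{x}, hmem x⟩ : S)) ?_
    intro a b h
    simpa [Set.singleton_eq_singleton_iff] using h

end NFPaper
end

section
/- (Extension property.) Let A ⊆ α be a set having small intersection with every litter, let ρ₀ be a bijection from A onto A, and let g be a permutation of the set ℒ of litters. Then there exists a permutation ρ of α extending ρ₀ such that for every litter L, ρ maps L ∖ A bijectively onto g(L) ∖ A. In particular, for every litter L the symmetric difference of ρ '' L with the litter g(L) is small, so ρ belongs to G, and every exception of ρ (every x in a litter L with ρ(x) ∉ g(L)) belongs to A. -/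
open Cardinal Set

universe u

namespace NFPaper

variable {α : Type u}

/-- Extension property: if `A ⊆ α` has small intersection with every litter, `ρ₀` maps
`A` bijectively onto `A`, and `g` permutes the set `ℒ` of litters, then there is a
permutation `ρ` of `α` extending `ρ₀` which maps `L \ A` bijectively onto `g L \ A`
for every litter `L`.  In particular `ρ '' L` has small symmetric difference from the
litter `g L`, so `ρ` is allowable, and every exception of `ρ` (every `x` in a litter
`L` with `ρ x ∉ g L`) belongs to `A`. -/
theorem extension_property
    (κ : Cardinal.{u}) (hreg : κ.IsRegular) (hunc : ℵ₀ < κ)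
    (α : Type u) (ℒ : Set (Set α)) (hpart : Setoid.IsPartition ℒ)
    (hsize : ∀ L ∈ ℒ, #L = κ)
    (A : Set α) (hA : ∀ L ∈ ℒ, SmallSet κ (L ∩ A))
    (ρ₀ : α → α) (hρ₀ : Set.BijOn ρ₀ A A)
    (g : Set α → Set α) (hg : Set.BijOn g ℒ ℒ) :
    ∃ ρ : Equiv.Perm α,
      (∀ a ∈ A, ρ a = ρ₀ a) ∧
      (∀ L ∈ ℒ, Set.BijOn ρ (L \ A) (g L \ A)) ∧
      (∀ L ∈ ℒ, SmallSet κ (symmDiff (ρ '' L) (g L))) ∧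
      Allowable κ ℒ ρ ∧
      (∀ L ∈ ℒ, ∀ x ∈ L, ρ x ∉ g L → x ∈ A) := by
  classical
  obtain ⟨-, hcov⟩ := hpart
  -- the unique litter containing a point
  have hlit : ∀ x : α, ∃ L, (L ∈ ℒ ∧ x ∈ L) ∧ ∀ M, M ∈ ℒ → x ∈ M → M = L := by
    intro x
    obtain ⟨L, hL, hu⟩ := hcov x
    exact ⟨L, hL, fun M h1 h2 => hu M ⟨h1, h2⟩⟩
  choose lit hlit₁ hlit₂ using hlit
  have hlitmem : ∀ x, lit x ∈ ℒ := fun x => (hlit₁ x).1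
  have hxlit : ∀ x, x ∈ lit x := fun x => (hlit₁ x).2
  -- cardinality of L \ A
  have hκL : ∀ L ∈ ℒ, #(L \ A : Set α) = κ := by
    intro L hL
    have hsub : L ∩ A ⊆ L := Set.inter_subset_left
    have hdiff : L \ (L ∩ A) = L \ A := Set.diff_self_inter
    have hsum : #(L \ A : Set α) + #(L ∩ A : Set α) = κ := by
      rw [← hdiff, Cardinal.mk_diff_add_mk hsub, hsize L hL]
    rcases lt_or_ge (#(L \ A : Set α)) κ with h | h
    · exfalso
      have := Cardinal.add_lt_of_lt hunc.le h (hA L hL)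
      rw [hsum] at this; exact lt_irrefl _ this
    · refine le_antisymm ?_ h
      rw [← hsize L hL]
      exact Cardinal.mk_le_mk_of_subset Set.diff_subset
  -- choose bijections L \ A ≃ g L \ A
  have hgmem : ∀ L ∈ ℒ, g L ∈ ℒ := fun L hL => hg.mapsTo hL
  have hE : ∀ L : Set α, L ∈ ℒ → Nonempty ((L \ A : Set α) ≃ (g L \ A : Set α)) := by
    intro L hL
    exact Cardinal.eq.1 (by rw [hκL L hL, hκL (g L) (hgmem L hL)])
  have E : ∀ L : Set α, L ∈ ℒ → ((L \ A : Set α) ≃ (g L \ A : Set α)) :=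
    fun L hL => (hE L hL).some
  -- the function
  set f : α → α := fun x =>
    if h : x ∈ A then ρ₀ x
    else (E (lit x) (hlitmem x) ⟨x, ⟨hxlit x, h⟩⟩ : α) with hf
  have hfA : ∀ a ∈ A, f a = ρ₀ a := by
    intro a ha
    simp only [hf]
    exact dif_pos ha
  have hf_eq : ∀ L (hL : L ∈ ℒ) x (hx : x ∈ L \ A), f x = (E L hL ⟨x, hx⟩ : α) := by
    intro L hL x hx
    have hLx : L = lit x := hlit₂ x L hL hx.1
    subst hLx
    simp only [hf]
    exact dif_neg hx.2
  -- BijOn on each litter minus A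
  have hbij : ∀ L (hL : L ∈ ℒ), Set.BijOn f (L \ A) (g L \ A) := by
    intro L hL
    refine ⟨?_, ?_, ?_⟩
    · intro x hx
      rw [hf_eq L hL x hx]
      exact (E L hL ⟨x, hx⟩).2
    · intro x hx y hy hxy
      rw [hf_eq L hL x hx, hf_eq L hL y hy] at hxy
      have := (E L hL).injective (Subtype.coe_injective hxy)
      exact congrArg Subtype.val this
    · intro y hy
      refine ⟨((E L hL).symm ⟨y, hy⟩ : α), ((E L hL).symm ⟨y, hy⟩).2, ?_⟩
      rw [hf_eq L hL _ ((E L hL).symm ⟨y, hy⟩).2]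
      have : (⟨((E L hL).symm ⟨y, hy⟩ : α), ((E L hL).symm ⟨y, hy⟩).2⟩ :
          (L \ A : Set α)) = (E L hL).symm ⟨y, hy⟩ := Subtype.ext rfl
      rw [this, Equiv.apply_symm_apply]
  have hfnA : ∀ x, x ∉ A → f x ∈ g (lit x) \ A := fun x hx =>
    (hbij (lit x) (hlitmem x)).mapsTo ⟨hxlit x, hx⟩
  -- injectivity
  have hinj : Function.Injective f := by
    intro x y hxy
    by_cases hx : x ∈ A <;> by_cases hy : y ∈ A
    · exact hρ₀.injOn hx hy (by rwa [hfA x hx, hfA y hy] at hxy)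
    · exfalso
      have h1 : f x ∈ A := by rw [hfA x hx]; exact hρ₀.mapsTo hx
      exact (hfnA y hy).2 (hxy ▸ h1)
    · exfalso
      have h1 : f y ∈ A := by rw [hfA y hy]; exact hρ₀.mapsTo hy
      exact (hfnA x hx).2 (hxy.symm ▸ h1)
    · have h1 := hfnA x hx
      have h2 := hfnA y hy
      have hgl : g (lit x) = g (lit y) := by
        have := hlit₂ (f x) (g (lit y)) (hgmem _ (hlitmem y)) (by rw [hxy]; exact h2.1)
        rw [this]
        exact (hlit₂ (f x) (g (lit x)) (hgmem _ (hlitmem x)) h1.1)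
      have hll : lit x = lit y := hg.injOn (hlitmem x) (hlitmem y) hgl
      exact (hbij (lit x) (hlitmem x)).injOn ⟨hxlit x, hx⟩
        (by rw [hll]; exact ⟨hxlit y, hy⟩) hxy
  -- surjectivity
  have hsurj : Function.Surjective f := by
    intro y
    by_cases hy : y ∈ A
    · obtain ⟨x, hx, hxy⟩ := hρ₀.surjOn hy
      exact ⟨x, by rw [hfA x hx, hxy]⟩
    · obtain ⟨L, hL, hgL⟩ := hg.surjOn (hlitmem y)
      have hyL : y ∈ g L \ A := by rw [hgL]; exact ⟨hxlit y, hy⟩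
      obtain ⟨x, hx, hxy⟩ := (hbij L hL).surjOn hyL
      exact ⟨x, hxy⟩
  have hsmall : ∀ L ∈ ℒ,
      SmallSet κ (symmDiff ((Equiv.ofBijective f ⟨hinj, hsurj⟩) '' L) (g L)) := by
    intro L hL
    have himg : (Equiv.ofBijective f ⟨hinj, hsurj⟩) '' L =
        (g L \ A) ∪ f '' (L ∩ A) := by
      have : L = (L \ A) ∪ (L ∩ A) := (Set.diff_union_inter L A).symm
      rw [show (Equiv.ofBijective f ⟨hinj, hsurj⟩) '' L = f '' L from rfl]
      conv_lhs => rw [this]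
      rw [Set.image_union, (hbij L hL).image_eq]
    rw [himg]
    have hsub : symmDiff ((g L \ A) ∪ f '' (L ∩ A)) (g L) ⊆
        f '' (L ∩ A) ∪ (g L ∩ A) := by
      intro z hz
      rcases hz with ⟨hz1, hz2⟩ | ⟨hz1, hz2⟩
      · rcases hz1 with h | h
        · exact absurd h.1 hz2
        · exact Or.inl h
      · exact Or.inr ⟨hz1, by_contra fun h => hz2 (Or.inl ⟨hz1, h⟩)⟩
    have h1 : #(f '' (L ∩ A) : Set α) < κ :=
      lt_of_le_of_lt Cardinal.mk_image_le (hA L hL)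
    have h2 : #(g L ∩ A : Set α) < κ := hA (g L) (hgmem L hL)
    calc #(symmDiff ((g L \ A) ∪ f '' (L ∩ A)) (g L) : Set α)
        ≤ #((f '' (L ∩ A) ∪ (g L ∩ A) : Set α)) := Cardinal.mk_le_mk_of_subset hsub
      _ ≤ #(f '' (L ∩ A) : Set α) + #(g L ∩ A : Set α) := Cardinal.mk_union_le _ _
      _ < κ := Cardinal.add_lt_of_lt hunc.le h1 h2
  refine ⟨Equiv.ofBijective f ⟨hinj, hsurj⟩, hfA, fun L hL => hbij L hL, hsmall,
    fun L hL => ⟨g L, hgmem L hL, hsmall L hL⟩, ?_⟩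
  · intro L hL x hx hρx
    by_contra hxA
    have := (hbij L hL).mapsTo ⟨hx, hxA⟩
    exact hρx this.1

end NFPaper
end
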